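/- arXiv:1506.09050 — 9 statements merged into one kernel-verified Lean document; each statement's English description precedes it below -/
import Mathlib

section
/- For all moulds P, Q in ARI, one has Dari(P,Q) = Δ(ari(Δ⁻¹(P), Δ⁻¹(Q))). In other words, the operator Δ is a Lie algebra isomorphism from ARI equipped with the ari-bracket onto ARI equipped with the Dari-bracket. -/
/-!
Moulds are modelled as families `P = (P_r)_{r ≥ 0}` of ℚ-valued functions of `r`
rational variables; identities of rational functions are expressed as pointwise
identities, guarded (where divisions genuinely occur) by the genericity
condition that all consecutive block sums of the variables are nonzero.
-/

/-- A mould: for each depth `r`, a function of `r` variables `u_1, …, u_r`. -/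
abbrev Mould : Type := (r : ℕ) → (Fin r → ℚ) → ℚ

namespace Mould

/-- Membership in `ARI`: vanishing constant term (depth-0 part equal to `0`). -/
def MemARI (P : Mould) : Prop := ∀ u : Fin 0 → ℚ, P 0 u = 0

/-- The first `i` letters of the word `u`. -/
def take {r : ℕ} (u : Fin r → ℚ) (i : ℕ) (h : i ≤ r) : Fin i → ℚ :=
  fun j => u ⟨j.1, by have := j.2; omega⟩

/-- The letters of the word `u` from position `i` on. -/
def drop {r : ℕ} (u : Fin r → ℚ) (i : ℕ) : Fin (r - i) → ℚ :=
  fun j => u ⟨i + j.1, by have := j.2; omega⟩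

/-- Mould multiplication `mu`. -/
def mu (P Q : Mould) : Mould := fun r u =>
  ∑ i : Fin (r + 1), P i.1 (take u i.1 (by have := i.2; omega)) * Q (r - i.1) (drop u i.1)

/-- The bracket `lu` associated to `mu`. -/
def lu (P Q : Mould) : Mould := fun r u => mu P Q r u - mu Q P r u

/-- `dur`: multiplication by `u_1 + ⋯ + u_r`. -/
def dur (P : Mould) : Mould := fun r u => (∑ j, u j) * P r u

/-- `dar`: multiplication by `u_1 ⋯ u_r`. -/
def dar (P : Mould) : Mould := fun r u => (∏ j, u j) * P r u

/-- `dur⁻¹`: division by `u_1 + ⋯ + u_r`. -/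
def durInv (P : Mould) : Mould := fun r u => P r u / (∑ j, u j)

/-- `dar⁻¹`: division by `u_1 ⋯ u_r`. -/
def darInv (P : Mould) : Mould := fun r u => P r u / (∏ j, u j)

/-- `Δ = dar ∘ dur`: multiplication by `u_1 ⋯ u_r (u_1 + ⋯ + u_r)`. -/
def delta (P : Mould) : Mould := dar (dur P)

/-- `Δ⁻¹`: division by `u_1 ⋯ u_r (u_1 + ⋯ + u_r)`. -/
def deltaInv (P : Mould) : Mould := darInv (durInv P)

/-- The word `a⌈c`, for the decomposition `a = (u_1,…,u_i)`, `b = (u_{i+1},…,u_k)`,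
`c = (u_{k+1},…,u_r)` (0-indexed: `a` = positions `< i`, `b` = positions `i..k-1`,
`c` = positions `k..r-1`): `a` followed by `c` with the sum of the letters of `b`
added to the first letter of `c`. -/
def flexUpper {r : ℕ} (u : Fin r → ℚ) (i k : ℕ) (hik : i < k) (hkr : k < r) :
    Fin (i + (r - k)) → ℚ := fun j =>
  if hj : j.1 < i then u ⟨j.1, by omega⟩
  else if hj2 : j.1 = i then ∑ m : Fin (k + 1 - i), u ⟨i + m.1, by have := m.2; omega⟩
  else u ⟨k + (j.1 - i), by have := j.2; omega⟩

/-- The word `a⌉c`: `a` with the sum of the letters of `b` added to its last letter,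
followed by `c`. -/
def flexLower {r : ℕ} (u : Fin r → ℚ) (i k : ℕ) (hi : 0 < i) (hik : i < k) (hkr : k ≤ r) :
    Fin (i + (r - k)) → ℚ := fun j =>
  if hj : j.1 < i - 1 then u ⟨j.1, by omega⟩
  else if hj2 : j.1 = i - 1 then
    ∑ m : Fin (k - (i - 1)), u ⟨(i - 1) + m.1, by have := m.2; omega⟩
  else u ⟨k + (j.1 - i), by have := j.2; omega⟩

/-- The middle word `b = (u_{i+1},…,u_k)` of a decomposition. -/
def blockWord {r : ℕ} (u : Fin r → ℚ) (i k : ℕ) (h : k ≤ r) : Fin (k - i) → ℚ :=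
  fun m => u ⟨i + m.1, by have := m.2; omega⟩

/-- Ecalle's derivation `arit(P)` applied to `M`:
`(arit(P)·M)(u) = Σ M(a⌈c)P(b) − Σ M(a⌉c)P(b)`, the first sum over decompositions
with `b, c` nonempty, the second over decompositions with `a, b` nonempty. -/
def arit (P M : Mould) : Mould := fun r u =>
  (∑ i : Fin (r + 1), ∑ k : Fin (r + 1),
    if h : i.1 < k.1 ∧ k.1 < r then
      M (i.1 + (r - k.1)) (flexUpper u i.1 k.1 h.1 h.2)
        * P (k.1 - i.1) (blockWord u i.1 k.1 (le_of_lt h.2))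
    else 0)
  - ∑ i : Fin (r + 1), ∑ k : Fin (r + 1),
    if h : 0 < i.1 ∧ i.1 < k.1 ∧ k.1 ≤ r then
      M (i.1 + (r - k.1)) (flexLower u i.1 k.1 h.1 h.2.1 h.2.2)
        * P (k.1 - i.1) (blockWord u i.1 k.1 h.2.2)
    else 0

/-- `Darit(P) = −dar ∘ (arit(Δ⁻¹(P)) − ad(Δ⁻¹(P))) ∘ dar⁻¹`, where `ad(X)·Y = lu(X,Y)`. -/
def Darit (P Q : Mould) : Mould := fun r u =>
  -(dar (fun s v => arit (deltaInv P) (darInv Q) s v - lu (deltaInv P) (darInv Q) s v) r u)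

/-- The `ari`-bracket: `ari(P,Q) = arit(Q)·P − arit(P)·Q + lu(P,Q)`. -/
def ari (P Q : Mould) : Mould := fun r u =>
  arit Q P r u - arit P Q r u + lu P Q r u

/-- The `Dari`-bracket: `Dari(P,Q) = Darit(P)·Q − Darit(Q)·P`. -/
def Dari (P Q : Mould) : Mould := fun r u => Darit P Q r u - Darit Q P r u

/-- The `push` operator: `push(P)(u_1,…,u_r) = P(−u_1−⋯−u_r, u_1,…,u_{r−1})`. -/
def push (P : Mould) : Mould := fun r u =>
  P r (fun j => if j.1 = 0 then -(∑ k, u k) else u ⟨j.1 - 1, by have := j.2; omega⟩)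

/-- The `swap` operator: `swap(P)(v_1,…,v_r) = P(v_r, v_{r−1}−v_r, …, v_1−v_2)`. -/
def swap (P : Mould) : Mould := fun r u =>
  P r (fun j =>
    if hj : j.1 = 0 then u ⟨r - 1, by have := j.2; omega⟩
    else u ⟨r - 1 - j.1, by have := j.2; omega⟩ - u ⟨r - j.1, by have := j.2; omega⟩)

/-- The mould `B = ma(b)` concentrated in depth 1, with `B(u_1) = 1`. -/
def Bm : Mould := fun r _ => if r = 1 then 1 else 0

/-- The mould `B₁ = ma([b,a])` concentrated in depth 1, with `B₁(u_1) = u_1`. -/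
def B1 : Mould := fun r u => if h : r = 1 then u ⟨0, by omega⟩ else 0

/-- A tuple of variables is *generic* when every consecutive block sum
`u_{i+1} + ⋯ + u_{j+1}` (`0 ≤ i ≤ j < r`) is nonzero; two rational-function
valued moulds are equal iff they agree at all generic tuples, and all
denominators occurring in the flexion operations are such block sums. -/
def Generic {r : ℕ} (u : Fin r → ℚ) : Prop :=
  ∀ (i j : ℕ) (_ : i ≤ j) (_ : j < r),
    (∑ m : Fin (j + 1 - i), u ⟨i + m.1, by have := m.2; omega⟩) ≠ 0

/-- A mould is polynomial-valued if each of its components is (the evaluation of)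
a polynomial. -/
def IsPolynomial (P : Mould) : Prop :=
  ∀ r : ℕ, ∃ p : MvPolynomial (Fin r) ℚ, ∀ u : Fin r → ℚ, P r u = MvPolynomial.eval u p

/-- The truncated word `(u_1,…,u_{r-1})`. -/
def init {r : ℕ} (u : Fin r → ℚ) : Fin (r - 1) → ℚ := take u (r - 1) (Nat.sub_le r 1)

/-- The shifted word `(u_2,…,u_r)`. -/
def tail {r : ℕ} (u : Fin r → ℚ) : Fin (r - 1) → ℚ := drop u 1

/-- The word `(u_2, …, u_{r−1}, −u_1−⋯−u_{r−1})`. -/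
def pushTail {r : ℕ} (u : Fin r → ℚ) : Fin (r - 1) → ℚ := fun j =>
  if j.1 = r - 2 then -(∑ m : Fin (r - 1), u ⟨m.1, by have := m.2; omega⟩)
  else u ⟨j.1 + 1, by have := j.2; omega⟩


end Mould


namespace MouldAux
open Mould Finset

/-- Extend a word to a function on ℕ by zero. -/
def U {r : ℕ} (u : Fin r → ℚ) : ℕ → ℚ := fun t => if h : t < r then u ⟨t, h⟩ else 0

lemma U_eq {r : ℕ} (u : Fin r → ℚ) {t : ℕ} (h : t < r) : U u t = u ⟨t, h⟩ := dif_pos h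

lemma sum_fin_shift {r : ℕ} (u : Fin r → ℚ) (i l : ℕ) (f : Fin l → ℚ)
    (hf : ∀ m : Fin l, f m = U u (i + m.1)) :
    ∑ m, f m = ∑ t ∈ Finset.Ico i (i + l), U u t := by
  rw [Finset.sum_Ico_eq_sum_range]
  simp only [Nat.add_sub_cancel_left]
  rw [Finset.sum_range fun m => U u (i + m)]
  exact Finset.sum_congr rfl fun m _ => hf m

lemma sum_word {r : ℕ} (u : Fin r → ℚ) : ∑ j, u j = ∑ t ∈ Finset.range r, U u t := by
  rw [Finset.range_eq_Ico]
  have := sum_fin_shift u 0 r u (fun m => by rw [zero_add, U_eq u m.2])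
  simpa using this

lemma genU {r : ℕ} {u : Fin r → ℚ} (hu : Generic u) {i j : ℕ} (hij : i ≤ j) (hj : j < r) :
    ∑ t ∈ Finset.Ico i (j + 1), U u t ≠ 0 := by
  have h := hu i j hij hj
  have key : (∑ m : Fin (j + 1 - i), u ⟨i + m.1, by have := m.2; omega⟩)
      = ∑ t ∈ Finset.Ico i (i + (j + 1 - i)), U u t := by
    refine sum_fin_shift u i (j + 1 - i) _ (fun m => ?_)
    rw [U_eq u (by have := m.2; omega : i + m.1 < r)]
  rw [key] at h
  have : i + (j + 1 - i) = j + 1 := by omega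
  rwa [this] at h

lemma sum_word_ne {r : ℕ} {u : Fin r → ℚ} (hu : Generic u) (hr : 0 < r) :
    ∑ j, u j ≠ 0 := by
  rw [sum_word]
  have := genU hu (Nat.zero_le (r - 1)) (by omega : r - 1 < r)
  rw [(by omega : r - 1 + 1 = r)] at this
  rwa [Finset.range_eq_Ico]

end MouldAux

namespace MouldAux
open Mould Finset

lemma sum_take {r : ℕ} (u : Fin r → ℚ) (i : ℕ) (h : i ≤ r) :
    ∑ j, take u i h j = ∑ t ∈ Finset.range i, U u t := by
  have := sum_fin_shift u 0 i (take u i h)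
    (fun m => by rw [zero_add, U_eq u (by have := m.2; omega : m.1 < r)]; rfl)
  rw [zero_add] at this
  rwa [← Finset.range_eq_Ico] at this

lemma sum_drop {r : ℕ} (u : Fin r → ℚ) (i : ℕ) (h : i ≤ r) :
    ∑ j, drop u i j = ∑ t ∈ Finset.Ico i r, U u t := by
  have := sum_fin_shift u i (r - i) (drop u i)
    (fun m => by rw [U_eq u (by have := m.2; omega : i + m.1 < r)]; rfl)
  rwa [(by omega : i + (r - i) = r)] at this

lemma sum_flexUpper {r : ℕ} (u : Fin r → ℚ) (i k : ℕ) (hik : i < k) (hkr : k < r) :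
    ∑ j, flexUpper u i k hik hkr j = ∑ j, u j := by
  classical
  set n := i + (r - k) with hn
  set F : ℕ → ℚ := fun j => if j < i then U u j
    else if j = i then ∑ t ∈ Finset.Ico i (k + 1), U u t
    else U u (k + (j - i)) with hF
  have step1 : ∑ j, flexUpper u i k hik hkr j = ∑ j ∈ Finset.range n, F j := by
    rw [Finset.sum_range F]
    refine Finset.sum_congr rfl fun j _ => ?_
    unfold Mould.flexUpper
    by_cases hj : j.1 < i
    · rw [dif_pos hj]; simp only [hF]; rw [if_pos hj, U_eq u (by omega : j.1 < r)]
    · rw [dif_neg hj]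
      by_cases hj2 : j.1 = i
      · rw [dif_pos hj2]; simp only [hF]; rw [if_neg hj, if_pos hj2]
        have key := sum_fin_shift u i (k + 1 - i)
          (fun m : Fin (k + 1 - i) => u ⟨i + m.1, by have := m.2; omega⟩)
          (fun m => by rw [U_eq u (by have := m.2; omega : i + m.1 < r)])
        rw [key, (by omega : i + (k + 1 - i) = k + 1)]
      · rw [dif_neg hj2]; simp only [hF]
        rw [if_neg hj, if_neg hj2, U_eq u (by have := j.2; omega : k + (j.1 - i) < r)]
  have e1 : ∑ j ∈ Finset.range (i + 1), F j = ∑ t ∈ Finset.range (k + 1), U u t := by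
    rw [Finset.sum_range_succ]
    have congr1 : ∑ j ∈ Finset.range i, F j = ∑ j ∈ Finset.range i, U u j :=
      Finset.sum_congr rfl (fun j hj => by
        simp only [hF]; rw [if_pos (Finset.mem_range.1 hj)])
    rw [congr1]
    have hFi : F i = ∑ t ∈ Finset.Ico i (k + 1), U u t := by
      simp only [hF]; simp
    rw [hFi, Finset.range_eq_Ico,
      Finset.sum_Ico_consecutive (U u) (Nat.zero_le i) (by omega : i ≤ k + 1),
      ← Finset.range_eq_Ico]
  have e2 : ∑ j ∈ Finset.Ico (i + 1) n, F j = ∑ t ∈ Finset.Ico (k + 1) r, U u t := by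
    rw [Finset.sum_Ico_eq_sum_range, Finset.sum_Ico_eq_sum_range,
      (by omega : n - (i + 1) = r - (k + 1))]
    refine Finset.sum_congr rfl fun t ht => ?_
    simp only [hF]
    rw [if_neg (by omega), if_neg (by omega)]
    congr 1
    omega
  have split : ∑ j ∈ Finset.range n, F j
      = ∑ j ∈ Finset.range (i + 1), F j + ∑ j ∈ Finset.Ico (i + 1) n, F j := by
    rw [Finset.range_eq_Ico,
      ← Finset.sum_Ico_consecutive F (Nat.zero_le (i + 1)) (by omega : i + 1 ≤ n),
      ← Finset.range_eq_Ico]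
  rw [step1, split, e1, e2, sum_word]
  simp only [Finset.range_eq_Ico]
  exact Finset.sum_Ico_consecutive (U u) (Nat.zero_le (k + 1)) (by omega : k + 1 ≤ r)

lemma sum_flexLower {r : ℕ} (u : Fin r → ℚ) (i k : ℕ) (hi : 0 < i) (hik : i < k) (hkr : k ≤ r) :
    ∑ j, flexLower u i k hi hik hkr j = ∑ j, u j := by
  classical
  set n := i + (r - k) with hn
  set F : ℕ → ℚ := fun j => if j < i - 1 then U u j
    else if j = i - 1 then ∑ t ∈ Finset.Ico (i - 1) k, U u t
    else U u (k + (j - i)) with hF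
  have step1 : ∑ j, flexLower u i k hi hik hkr j = ∑ j ∈ Finset.range n, F j := by
    rw [Finset.sum_range F]
    refine Finset.sum_congr rfl fun j _ => ?_
    unfold Mould.flexLower
    by_cases hj : j.1 < i - 1
    · rw [dif_pos hj]; simp only [hF]; rw [if_pos hj, U_eq u (by omega : j.1 < r)]
    · rw [dif_neg hj]
      by_cases hj2 : j.1 = i - 1
      · rw [dif_pos hj2]; simp only [hF]; rw [if_neg hj, if_pos hj2]
        have key := sum_fin_shift u (i - 1) (k - (i - 1))
          (fun m : Fin (k - (i - 1)) => u ⟨(i - 1) + m.1, by have := m.2; omega⟩)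
          (fun m => by rw [U_eq u (by have := m.2; omega : (i - 1) + m.1 < r)])
        rw [key, (by omega : (i - 1) + (k - (i - 1)) = k)]
      · rw [dif_neg hj2]; simp only [hF]
        rw [if_neg hj, if_neg hj2, U_eq u (by have := j.2; omega : k + (j.1 - i) < r)]
  have e1 : ∑ j ∈ Finset.range i, F j = ∑ t ∈ Finset.range k, U u t := by
    rw [(by omega : i = (i - 1) + 1), Finset.sum_range_succ]
    have congr1 : ∑ j ∈ Finset.range (i - 1), F j = ∑ j ∈ Finset.range (i - 1), U u j :=
      Finset.sum_congr rfl (fun j hj => by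
        simp only [hF]; rw [if_pos (Finset.mem_range.1 hj)])
    rw [congr1]
    have hFi : F (i - 1) = ∑ t ∈ Finset.Ico (i - 1) k, U u t := by
      simp only [hF]; simp
    rw [hFi, Finset.range_eq_Ico,
      Finset.sum_Ico_consecutive (U u) (Nat.zero_le (i - 1)) (by omega : i - 1 ≤ k),
      ← Finset.range_eq_Ico]
  have e2 : ∑ j ∈ Finset.Ico i n, F j = ∑ t ∈ Finset.Ico k r, U u t := by
    rw [Finset.sum_Ico_eq_sum_range, Finset.sum_Ico_eq_sum_range,
      (by omega : n - i = r - k)]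
    refine Finset.sum_congr rfl fun t ht => ?_
    simp only [hF]
    rw [if_neg (by omega), if_neg (by omega)]
    congr 1
    omega
  have split : ∑ j ∈ Finset.range n, F j
      = ∑ j ∈ Finset.range i, F j + ∑ j ∈ Finset.Ico i n, F j := by
    rw [Finset.range_eq_Ico,
      ← Finset.sum_Ico_consecutive F (Nat.zero_le i) (by omega : i ≤ n),
      ← Finset.range_eq_Ico]
  rw [step1, split, e1, e2, sum_word]
  simp only [Finset.range_eq_Ico]
  exact Finset.sum_Ico_consecutive (U u) (Nat.zero_le k) hkr

end MouldAux

namespace MouldAux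
open Mould Finset

lemma darInv_eq (Q : Mould) (hQ : MemARI Q) {s : ℕ} (w : Fin s → ℚ)
    (h : s = 0 ∨ (∑ j, w j) ≠ 0) :
    darInv Q s w = (∑ j, w j) * deltaInv Q s w := by
  rcases h with h | h
  · subst h
    simp [Mould.darInv, Mould.deltaInv, Mould.durInv, hQ w]
  · show Q s w / (∏ j, w j) = (∑ j, w j) * ((Q s w / (∑ j, w j)) / (∏ j, w j))
    rw [div_right_comm, mul_comm, div_mul_cancel₀ _ h]

lemma arit_darInv (X Q : Mould) (hQ : MemARI Q) {r : ℕ} {u : Fin r → ℚ} (hu : Generic u) :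
    arit X (darInv Q) r u = (∑ j, u j) * arit X (deltaInv Q) r u := by
  unfold Mould.arit
  rw [mul_sub, Finset.mul_sum, Finset.mul_sum]
  congr 1
  · refine Finset.sum_congr rfl fun i _ => ?_
    rw [Finset.mul_sum]
    refine Finset.sum_congr rfl fun k _ => ?_
    by_cases h : i.1 < k.1 ∧ k.1 < r
    · rw [dif_pos h, dif_pos h]
      have hw := sum_flexUpper u i.1 k.1 h.1 h.2
      have hne : (∑ j, u j) ≠ 0 := sum_word_ne hu (by omega)
      rw [darInv_eq Q hQ _ (Or.inr (by rw [hw]; exact hne)), hw]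
      ring
    · rw [dif_neg h, dif_neg h, mul_zero]
  · refine Finset.sum_congr rfl fun i _ => ?_
    rw [Finset.mul_sum]
    refine Finset.sum_congr rfl fun k _ => ?_
    by_cases h : 0 < i.1 ∧ i.1 < k.1 ∧ k.1 ≤ r
    · rw [dif_pos h, dif_pos h]
      have hw := sum_flexLower u i.1 k.1 h.1 h.2.1 h.2.2
      have hne : (∑ j, u j) ≠ 0 := sum_word_ne hu (by omega)
      rw [darInv_eq Q hQ _ (Or.inr (by rw [hw]; exact hne)), hw]
      ring
    · rw [dif_neg h, dif_neg h, mul_zero]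

lemma mu_darInv_right (X Q : Mould) (hQ : MemARI Q) {r : ℕ} {u : Fin r → ℚ}
    (hu : Generic u) :
    mu X (darInv Q) r u = ∑ i : Fin (r + 1),
      X i.1 (take u i.1 (by have := i.2; omega)) *
        ((∑ j, drop u i.1 j) * deltaInv Q (r - i.1) (drop u i.1)) := by
  unfold Mould.mu
  refine Finset.sum_congr rfl fun i _ => ?_
  congr 1
  refine darInv_eq Q hQ _ ?_
  by_cases hir : i.1 < r
  · right
    rw [sum_drop u i.1 (le_of_lt hir)]
    have := genU hu (show i.1 ≤ r - 1 by omega) (show r - 1 < r by omega)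
    rwa [(by omega : r - 1 + 1 = r)] at this
  · left; omega

lemma mu_darInv_left (X Q : Mould) (hQ : MemARI Q) {r : ℕ} {u : Fin r → ℚ}
    (hu : Generic u) :
    mu (darInv Q) X r u = ∑ i : Fin (r + 1),
      ((∑ j, take u i.1 (by have := i.2; omega) j) *
          deltaInv Q i.1 (take u i.1 (by have := i.2; omega))) *
        X (r - i.1) (drop u i.1) := by
  unfold Mould.mu
  refine Finset.sum_congr rfl fun i _ => ?_
  congr 1
  refine darInv_eq Q hQ _ ?_
  by_cases hi0 : i.1 = 0
  · left; exact hi0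
  · right
    rw [sum_take u i.1 (by have := i.2; omega)]
    have := genU hu (Nat.zero_le (i.1 - 1)) (show i.1 - 1 < r by have := i.2; omega)
    rw [(by omega : i.1 - 1 + 1 = i.1)] at this
    rwa [Finset.range_eq_Ico]

lemma sum_take_drop {r : ℕ} (u : Fin r → ℚ) (i : ℕ) (h : i ≤ r) :
    (∑ j, take u i h j) + (∑ j, drop u i j) = ∑ j, u j := by
  rw [sum_take u i h, sum_drop u i h, sum_word]
  simp only [Finset.range_eq_Ico]
  exact Finset.sum_Ico_consecutive (U u) (Nat.zero_le i) h

end MouldAux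

open Mould in
/-- For all moulds `P, Q ∈ ARI`, one has
`Dari(P,Q) = Δ(ari(Δ⁻¹(P), Δ⁻¹(Q)))` (an equality of rational-function valued
moulds, i.e. an identity at every generic tuple of variables). In other words,
`Δ` is a Lie algebra isomorphism from `ARI_ari` onto `ARI_Dari`. -/
theorem delta_is_ari_Dari_isomorphism (P Q : Mould) (hP : MemARI P) (hQ : MemARI Q) :
    ∀ (r : ℕ) (u : Fin r → ℚ), Generic u →
      Dari P Q r u = delta (ari (deltaInv P) (deltaInv Q)) r u := by
  intro r u hu
  classical
  have h1 := MouldAux.arit_darInv (deltaInv P) Q hQ hu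
  have h2 := MouldAux.arit_darInv (deltaInv Q) P hP hu
  have h3 := MouldAux.mu_darInv_right (deltaInv P) Q hQ hu
  have h4 := MouldAux.mu_darInv_left (deltaInv P) Q hQ hu
  have h5 := MouldAux.mu_darInv_right (deltaInv Q) P hP hu
  have h6 := MouldAux.mu_darInv_left (deltaInv Q) P hP hu
  have key1 : (∑ i : Fin (r + 1),
        deltaInv P i.1 (take u i.1 (by have := i.2; omega)) *
          ((∑ j, drop u i.1 j) * deltaInv Q (r - i.1) (drop u i.1)))
      + (∑ i : Fin (r + 1),
        ((∑ j, take u i.1 (by have := i.2; omega) j) *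
            deltaInv P i.1 (take u i.1 (by have := i.2; omega))) *
          deltaInv Q (r - i.1) (drop u i.1))
      = (∑ j, u j) * mu (deltaInv P) (deltaInv Q) r u := by
    rw [← Finset.sum_add_distrib]
    unfold Mould.mu
    rw [Finset.mul_sum]
    refine Finset.sum_congr rfl fun i _ => ?_
    have hsd := MouldAux.sum_take_drop u i.1 (by have := i.2; omega)
    set a := deltaInv P i.1 (take u i.1 (by have := i.2; omega))
    set b := deltaInv Q (r - i.1) (drop u i.1)
    set σ := ∑ j, take u i.1 (by have := i.2; omega : i.1 ≤ r) j
    set τ := ∑ j, drop u i.1 j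
    linear_combination (a * b) * hsd
  have key2 : (∑ i : Fin (r + 1),
        deltaInv Q i.1 (take u i.1 (by have := i.2; omega)) *
          ((∑ j, drop u i.1 j) * deltaInv P (r - i.1) (drop u i.1)))
      + (∑ i : Fin (r + 1),
        ((∑ j, take u i.1 (by have := i.2; omega) j) *
            deltaInv Q i.1 (take u i.1 (by have := i.2; omega))) *
          deltaInv P (r - i.1) (drop u i.1))
      = (∑ j, u j) * mu (deltaInv Q) (deltaInv P) r u := by
    rw [← Finset.sum_add_distrib]
    unfold Mould.mu
    rw [Finset.mul_sum]
    refine Finset.sum_congr rfl fun i _ => ?_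
    have hsd := MouldAux.sum_take_drop u i.1 (by have := i.2; omega)
    set a := deltaInv Q i.1 (take u i.1 (by have := i.2; omega))
    set b := deltaInv P (r - i.1) (drop u i.1)
    set σ := ∑ j, take u i.1 (by have := i.2; omega : i.1 ≤ r) j
    set τ := ∑ j, drop u i.1 j
    linear_combination (a * b) * hsd
  simp only [Mould.Dari, Mould.Darit, Mould.delta, Mould.dar, Mould.dur, Mould.lu, Mould.ari]
  rw [h1, h2, h3, h4, h5, h6]
  linear_combination (∏ j, u j) * key1 - (∏ j, u j) * key2
end

section
/- Let P ∈ ARI be a push-invariant mould, and let P′ be its mould partner, i.e. the mould with P′(∅) = 0, P′(u_1) = 0, and P′(u_1,…,u_r) = (P(u_2,…,u_{r−1},−u_1−⋯−u_{r−1}) − P(u_2,…,u_r))/(u_1+⋯+u_r) for r ≥ 2. Then lu(P,B) = dur(P′). -/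
section Aux
open Mould

lemma mu_Bm_right (P : Mould) (r : ℕ) (u : Fin (r+1) → ℚ) :
    mu P Bm (r+1) u = P r (init u) := by
  unfold mu
  rw [Finset.sum_eq_single (⟨r, by omega⟩ : Fin (r+2))]
  · have h1 : Bm (r + 1 - r) (drop u r) = 1 := by
      simp only [Bm]; rw [if_pos (by omega)]
    rw [h1, mul_one]
    rfl
  · intro b _ hb
    have hb1 : b.1 ≠ r := fun h => hb (Fin.ext h)
    have : r + 1 - b.1 ≠ 1 := by have := b.2; omega
    simp [Bm, this]
  · intro h
    exact absurd (Finset.mem_univ _) h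

lemma mu_Bm_left (P : Mould) (r : ℕ) (u : Fin (r+1) → ℚ) :
    mu Bm P (r+1) u = P r (tail u) := by
  unfold mu
  rw [Finset.sum_eq_single (⟨1, by omega⟩ : Fin (r+2))]
  · have h1 : Bm 1 (take u 1 (by omega)) = 1 := by
      simp [Bm]
    rw [h1, one_mul]
    rfl
  · intro b _ hb
    have hb1 : b.1 ≠ 1 := fun h => hb (Fin.ext h)
    simp [Bm, hb1]
  · intro h
    exact absurd (Finset.mem_univ _) h

lemma tail_sum (n : ℕ) (u : Fin (n+2) → ℚ) :
    (∑ k : Fin (n+1), tail u k) = (∑ k : Fin (n+2), u k) - u 0 := by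
  rw [Fin.sum_univ_succ (f := u)]
  have : (∑ k : Fin (n+1), tail u k) = ∑ k : Fin (n+1), u k.succ := by
    apply Finset.sum_congr rfl
    intro k _
    show u ⟨1 + k.1, _⟩ = u k.succ
    congr 1
    exact Fin.ext (by simp [Nat.add_comm])
  rw [this]
  ring

lemma pushTail_sum (n : ℕ) (u : Fin (n+2) → ℚ) :
    (∑ k : Fin (n+1), pushTail u k) = -u 0 := by
  rw [Fin.sum_univ_castSucc]
  have hlast : pushTail u (Fin.last n) =
      -(∑ m : Fin (n+1), u ⟨m.1, by have := m.2; omega⟩) := by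
    show (if (Fin.last n).1 = n + 2 - 2 then _ else _) = _
    rw [if_pos (by simp)]
    rfl
  rw [hlast]
  have hrest : ∀ j : Fin n, pushTail u j.castSucc = u ⟨j.1 + 1, by have := j.2; omega⟩ := by
    intro j
    show (if (j.castSucc).1 = n + 2 - 2 then _ else _) = _
    rw [if_neg (by have := j.2; simp; omega)]
    rfl
  rw [Finset.sum_congr rfl (fun j _ => hrest j)]
  have : (∑ m : Fin (n+1), u ⟨m.1, by have := m.2; omega⟩)
      = u 0 + ∑ j : Fin n, u ⟨j.1 + 1, by have := j.2; omega⟩ := by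
    rw [Fin.sum_univ_succ (f := fun m : Fin (n+1) => u ⟨m.1, by have := m.2; omega⟩)]
    simp only [Fin.val_succ]
    rfl
  rw [this]
  ring

end Aux

open Mould in
/-- Let `P ∈ ARI` be a push-invariant mould and let `P′` be its
mould partner, i.e. the mould with `P′(∅) = 0`, `P′(u_1) = 0` and
`P′(u_1,…,u_r) = (P(u_2,…,u_{r−1},−u_1−⋯−u_{r−1}) − P(u_2,…,u_r))/(u_1+⋯+u_r)`
for `r ≥ 2`. Then `lu(P,B) = dur(P′)`. -/
theorem lu_B_eq_dur_partner (P P' : Mould) (hP : MemARI P)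
    (hpush : ∀ (r : ℕ) (u : Fin r → ℚ), push P r u = P r u)
    (hP'0 : ∀ u : Fin 0 → ℚ, P' 0 u = 0)
    (hP'1 : ∀ u : Fin 1 → ℚ, P' 1 u = 0)
    (hP'formula : ∀ (r : ℕ), 2 ≤ r → ∀ u : Fin r → ℚ, (∑ k, u k) ≠ 0 →
      P' r u = (P (r - 1) (pushTail u) - P (r - 1) (tail u)) / (∑ k, u k)) :
    ∀ (r : ℕ) (u : Fin r → ℚ), lu P Bm r u = dur P' r u := by
  intro r u
  match r, u with
  | 0, u =>
    simp [lu, mu, dur, Bm, hP'0, hP u]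
  | 1, u =>
    have h1 : lu P Bm 1 u = P 0 (init u) - P 0 (tail u) := by
      show mu P Bm (0+1) u - mu Bm P (0+1) u = _
      rw [mu_Bm_right, mu_Bm_left]
    rw [h1, hP (init u), hP (tail u), dur, hP'1 u]
    ring
  | (n+2), u =>
    have hlhs : lu P Bm (n+2) u = P (n+1) (init u) - P (n+1) (tail u) := by
      show mu P Bm (n+1+1) u - mu Bm P (n+1+1) u = _
      rw [mu_Bm_right, mu_Bm_left]
    rw [hlhs]
    by_cases hS : (∑ k : Fin (n+2), u k) = 0
    · have hinit : P (n+1) (init u) = P (n+1) (tail u) := by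
        rw [← hpush (n+1) (tail u)]
        show P (n+1) (init u) = P (n+1) _
        congr 1
        funext j
        by_cases hj : j.1 = 0
        · show init u j = if j.1 = 0 then _ else _
          rw [if_pos hj, tail_sum, hS]
          show u ⟨j.1, _⟩ = -(0 - u 0)
          have : j = ⟨0, by omega⟩ := Fin.ext hj
          rw [this]
          show u ⟨0, _⟩ = -(0 - u 0)
          norm_num
        · show init u j = if j.1 = 0 then _ else _
          rw [if_neg hj]
          show u ⟨j.1, _⟩ = u ⟨1 + (j.1 - 1), _⟩
          congr 1
          exact Fin.ext (by simp; omega)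
      rw [hinit, dur, hS]
      ring
    · rw [dur, hP'formula (n+2) (by omega) u hS]
      have hpt : P (n+1) (pushTail u) = P (n+1) (init u) := by
        rw [← hpush (n+1) (pushTail u)]
        show P (n+1) _ = P (n+1) (init u)
        congr 1
        funext j
        by_cases hj : j.1 = 0
        · show (if j.1 = 0 then _ else _) = init u j
          rw [if_pos hj, pushTail_sum]
          have : j = ⟨0, by omega⟩ := Fin.ext hj
          rw [this]
          show -(-u 0) = u ⟨0, _⟩
          norm_num
        · show (if j.1 = 0 then _ else _) = init u j
          rw [if_neg hj]
          show pushTail u ⟨j.1 - 1, _⟩ = u ⟨j.1, _⟩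
          show (if j.1 - 1 = n + 2 - 2 then _ else _) = _
          rw [if_neg (by have := j.2; omega)]
          show u ⟨(j.1 - 1) + 1, _⟩ = u ⟨j.1, _⟩
          congr 1
          exact Fin.ext (by simp; omega)
      show P (n+1) (init u) - P (n+1) (tail u) =
        (∑ j : Fin (n+2), u j) * ((P (n+1) (pushTail u) - P (n+1) (tail u)) / ∑ k : Fin (n+2), u k)
      rw [hpt]
      field_simp
end

section
/- Let P, P′ ∈ ARI be polynomial-valued moulds such that lu(P,B) = dur(P′). Then P is push-invariant, P′ vanishes in depths 0 and 1, and for every r ≥ 2 one has P′(u_1,…,u_r) = (P(u_2,…,u_{r−1},−u_1−⋯−u_{r−1}) − P(u_2,…,u_r))/(u_1+⋯+u_r). -/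
open Mould in
lemma my_lu_eq (P : Mould) (hP : MemARI P) (r : ℕ) (u : Fin (r+1) → ℚ) :
    lu P Bm (r+1) u = P r (init u) - P r (tail u) := by
  have h1 : mu P Bm (r+1) u = P r (init u) := by
    simp only [mu]
    rw [Finset.sum_eq_single_of_mem (⟨r, by omega⟩ : Fin (r+2)) (Finset.mem_univ _)]
    · have h : r + 1 - r = 1 := by omega
      simp only [Bm]
      rw [if_pos h, mul_one]
      rfl
    · intro b _ hb
      have hb2 := b.2
      have : ¬ (r + 1 - b.1 = 1) := by
        intro h
        exact hb (Fin.ext (by simp; omega))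
      simp [Bm, this]
  have h2 : mu Bm P (r+1) u = P r (tail u) := by
    simp only [mu]
    rw [Finset.sum_eq_single_of_mem (⟨1, by omega⟩ : Fin (r+2)) (Finset.mem_univ _)]
    · simp only [Bm, if_true, one_mul]
      rfl
    · intro b _ hb
      have : ¬ (b.1 = 1) := by
        intro h
        exact hb (Fin.ext (by simp; omega))
      simp [Bm, this]
  simp only [lu, h1, h2]


open Mould in
/-- Let `P, P′ ∈ ARI` be polynomial-valued moulds such that
`lu(P,B) = dur(P′)`. Then `P` is push-invariant, `P′` vanishes in depths `0`
and `1`, and for every `r ≥ 2` one has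
`P′(u_1,…,u_r) = (P(u_2,…,u_{r−1},−u_1−⋯−u_{r−1}) − P(u_2,…,u_r))/(u_1+⋯+u_r)`
(at every tuple where the denominator is nonzero). -/
theorem partner_of_lu_B_eq_dur (P P' : Mould) (hP : MemARI P) (hP' : MemARI P')
    (hPpol : IsPolynomial P) (hP'pol : IsPolynomial P')
    (heq : ∀ (r : ℕ) (u : Fin r → ℚ), lu P Bm r u = dur P' r u) :
    (∀ (r : ℕ) (u : Fin r → ℚ), push P r u = P r u) ∧
    (∀ u : Fin 0 → ℚ, P' 0 u = 0) ∧
    (∀ u : Fin 1 → ℚ, P' 1 u = 0) ∧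
    (∀ (r : ℕ), 2 ≤ r → ∀ u : Fin r → ℚ, (∑ k, u k) ≠ 0 →
      P' r u = (P (r - 1) (pushTail u) - P (r - 1) (tail u)) / (∑ k, u k)) := by
  have key : ∀ (r : ℕ) (u : Fin (r+1) → ℚ),
      P r (init u) - P r (tail u) = (∑ j, u j) * P' (r+1) u := by
    intro r u
    rw [← my_lu_eq P hP r u, heq (r+1) u]
    rfl
  have hpush : ∀ (r : ℕ) (u : Fin r → ℚ), push P r u = P r u := by
    intro r u
    set w : Fin (r+1) → ℚ := fun j =>
      if _ : j.1 = 0 then -(∑ k, u k) else u ⟨j.1 - 1, by have := j.2; omega⟩ with hwdef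
    have hs : ∀ i : Fin r, w i.succ = u i := by
      intro i
      simp only [hwdef]
      rw [dif_neg (by simp [Fin.val_succ])]
      congr 1
    have hsum : (∑ j, w j) = 0 := by
      rw [Fin.sum_univ_succ]
      have h0 : w 0 = -(∑ k, u k) := by simp [hwdef]
      rw [h0]
      simp only [hs]
      exact neg_add_cancel _
    have hk := key r w
    have hinit : P r (init w) = push P r u := by
      show P r (init w) = P r _
      congr 1
    have htail : P r (tail w) = P r u := by
      congr 1
      funext j
      simp only [tail, drop, hwdef]
      rw [dif_neg (by simp)]
      congr 1
      exact Fin.ext (by simp)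
    rw [hinit, htail, hsum, zero_mul] at hk
    linarith [hk]
  refine ⟨hpush, hP', ?_, ?_⟩
  · intro u
    obtain ⟨p, hp⟩ := hP'pol 1
    have hz : ∀ v : Fin 1 → ℚ, v 0 * P' 1 v = 0 := by
      intro v
      have h := heq 1 v
      rw [my_lu_eq P hP 0 v, hP (init v), hP (tail v)] at h
      have h' : dur P' 1 v = (∑ j : Fin 1, v j) * P' 1 v := rfl
      rw [h', Fin.sum_univ_one] at h
      linarith [h]
    have hXp : (MvPolynomial.X 0 * p : MvPolynomial (Fin 1) ℚ) = 0 := by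
      apply MvPolynomial.funext
      intro x
      rw [map_mul, MvPolynomial.eval_X, ← hp, map_zero, hz x]
    have hp0 : p = 0 := by
      rcases mul_eq_zero.mp hXp with h | h
      · exact absurd h (MvPolynomial.X_ne_zero 0)
      · exact h
    rw [hp, hp0, map_zero]
  · intro r hr u hu
    obtain ⟨s, rfl⟩ : ∃ s, r = s + 2 := ⟨r - 2, by omega⟩
    have hk := key (s+1) u
    have hsum2 : (∑ k : Fin (s+1), pushTail u k) = -(u 0) := by
      rw [Fin.sum_univ_castSucc]
      have hlast : pushTail u (Fin.last s)
          = -(∑ m : Fin (s+1), u ⟨m.1, by have := m.2; omega⟩) := by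
        simp only [pushTail]
        rw [if_pos (by simp)]
        rfl
      have hcast : ∀ k : Fin s, pushTail u k.castSucc
          = u ⟨k.1 + 1, by have := k.2; omega⟩ := by
        intro k
        have hk2 := k.2
        simp only [pushTail]
        rw [if_neg (by simp; omega)]
        rfl
      rw [hlast]
      simp only [hcast]
      rw [Fin.sum_univ_succ]
      have : ∀ m : Fin s, u ⟨(Fin.succ m).1, by have := m.2; omega⟩
          = u ⟨m.1 + 1, by have := m.2; omega⟩ := by
        intro m
        congr 1
      simp only [this]
      have h00 : u (⟨(0 : Fin (s+1)).1, by omega⟩ : Fin (s+2)) = u 0 := by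
        congr 1
      rw [h00]
      ring
    have hptail : P (s+1) (pushTail u) = P (s+1) (init u) := by
      rw [← hpush (s+1) (pushTail u)]
      show P (s+1) _ = P (s+1) (init u)
      congr 1
      funext j
      have hj2 := j.2
      by_cases h : j.1 = 0
      · rw [if_pos h, hsum2, neg_neg]
        show u 0 = init u j
        simp only [init, take]
        congr 1
        exact Fin.ext (by simp [h])
      · rw [if_neg h]
        simp only [pushTail, init, take]
        rw [if_neg (by omega)]
        congr 1
        apply Fin.ext
        simp
        omega
    have hgoal : P' (s+2) u * (∑ k, u k)
        = P (s+1) (pushTail u) - P (s+1) (tail u) := by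
      rw [hptail]
      linarith [hk]
    rw [eq_div_iff hu]
    exact hgoal
end

section
/- For all moulds P, Q ∈ ARI, one has Darit(P)(dur(Q)) = dur(Darit(P)(Q)) + lu(Q,P). (This is the identity expressing that the derivation Darit(P) of ARI_lu extends to the extra generator a, taking the value P on a.) -/
namespace Mould

/-!
Put `X = Δ⁻¹(P)` and `N = dar⁻¹(Q)`, so that `dar⁻¹(dur Q) = dur N`. The flexions `a⌈c`, `a⌉c`
keep the total sum of the letters, so `arit(X)` commutes with `dur`; and `dur` is a derivation
of `mu`, hence of `lu`: `lu(X, dur N) = dur(lu(X, N)) - lu(dur X, N)`. Therefore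
`Darit(P)(dur Q) - dur(Darit(P)(Q)) = -dar(lu(dur X, N)) = -lu(Δ Δ⁻¹ P, dar dar⁻¹ Q)`, as `dar` is
multiplicative for `mu`. On the prefixes and suffixes of a generic word this is `-lu(P, Q)`; the
empty word, where `Δ Δ⁻¹ P` vanishes, is harmless because `P ∈ ARI`.
-/

/-- Extending a word by zeros turns sums over its subwords into sums over intervals of `ℕ`. -/
def natExtend {r : ℕ} (u : Fin r → ℚ) (t : ℕ) : ℚ := if h : t < r then u ⟨t, h⟩ else 0

lemma natExtend_of_lt {r : ℕ} (u : Fin r → ℚ) {t : ℕ} (h : t < r) :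
    natExtend u t = u ⟨t, h⟩ :=
  dif_pos h

@[to_additive]
lemma prod_fin_eq_prod_range {M : Type*} [CommMonoid M] {n : ℕ} {g : Fin n → M} {f : ℕ → M}
    (h : ∀ j : Fin n, g j = f j) : ∏ j, g j = ∏ t ∈ Finset.range n, f t := by
  rw [← Fin.prod_univ_eq_prod_range]
  exact Finset.prod_congr rfl fun j _ => h j

lemma prod_eq_prod_range_natExtend {r : ℕ} (u : Fin r → ℚ) :
    ∏ j, u j = ∏ t ∈ Finset.range r, natExtend u t :=
  prod_fin_eq_prod_range fun j => (natExtend_of_lt u j.2).symm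

lemma sum_eq_sum_range_natExtend {r : ℕ} (u : Fin r → ℚ) :
    ∑ j, u j = ∑ t ∈ Finset.range r, natExtend u t :=
  sum_fin_eq_sum_range fun j => (natExtend_of_lt u j.2).symm

lemma sum_block_eq_sum_Ico {r : ℕ} (u : Fin r → ℚ) (p q : ℕ) (hq : q ≤ r) :
    ∑ m : Fin (q - p), u ⟨p + m.1, by have := m.2; omega⟩
      = ∑ t ∈ Finset.Ico p q, natExtend u t := by
  rw [Finset.sum_Ico_eq_sum_range]
  exact sum_fin_eq_sum_range fun m => (natExtend_of_lt u _).symm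

lemma prod_take {r : ℕ} (u : Fin r → ℚ) (i : ℕ) (h : i ≤ r) :
    ∏ j, take u i h j = ∏ t ∈ Finset.range i, natExtend u t :=
  prod_fin_eq_prod_range fun _ => (natExtend_of_lt u _).symm

lemma sum_take {r : ℕ} (u : Fin r → ℚ) (i : ℕ) (h : i ≤ r) :
    ∑ j, take u i h j = ∑ t ∈ Finset.range i, natExtend u t :=
  sum_fin_eq_sum_range fun _ => (natExtend_of_lt u _).symm

lemma prod_drop {r : ℕ} (u : Fin r → ℚ) (i : ℕ) :
    ∏ j, drop u i j = ∏ t ∈ Finset.Ico i r, natExtend u t := by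
  rw [Finset.prod_Ico_eq_prod_range]
  exact prod_fin_eq_prod_range fun _ => (natExtend_of_lt u _).symm

lemma sum_drop {r : ℕ} (u : Fin r → ℚ) (i : ℕ) :
    ∑ j, drop u i j = ∑ t ∈ Finset.Ico i r, natExtend u t :=
  sum_block_eq_sum_Ico u i r le_rfl

lemma prod_take_mul_prod_drop {r : ℕ} (u : Fin r → ℚ) (i : ℕ) (h : i ≤ r) :
    (∏ j, take u i h j) * ∏ j, drop u i j = ∏ j, u j := by
  rw [prod_take, prod_drop, Finset.prod_range_mul_prod_Ico _ h, prod_eq_prod_range_natExtend]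

lemma sum_take_add_sum_drop {r : ℕ} (u : Fin r → ℚ) (i : ℕ) (h : i ≤ r) :
    (∑ j, take u i h j) + ∑ j, drop u i j = ∑ j, u j := by
  rw [sum_take, sum_drop, Finset.sum_range_add_sum_Ico _ h, sum_eq_sum_range_natExtend]

/-- Replacing the letters in positions `[p, q)` by their sum leaves the total sum unchanged. -/
lemma sum_range_contract_Ico {M : Type*} [AddCommMonoid M] (f : ℕ → M) {p q r : ℕ}
    (hpq : p < q) (hqr : q ≤ r) :
    ∑ j ∈ Finset.range (p + 1 + (r - q)),
        (if j < p then f j else if j = p then ∑ m ∈ Finset.Ico p q, f m else f (q + (j - p - 1)))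
      = ∑ j ∈ Finset.range r, f j := by
  rw [Finset.sum_range_add, Finset.sum_range_succ (M := M), if_neg (lt_irrefl p), if_pos rfl,
    ← Finset.sum_range_add_sum_Ico f (hpq.le.trans hqr),
    ← Finset.sum_Ico_consecutive f hpq.le hqr, Finset.sum_Ico_eq_sum_range f q r, ← add_assoc]
  congr 2
  · exact Finset.sum_congr rfl fun j hj => if_pos (Finset.mem_range.mp hj)
  · funext j
    rw [if_neg (by omega), if_neg (by omega), show p + 1 + j - p - 1 = j by omega]

lemma sum_flexUpper {r : ℕ} (u : Fin r → ℚ) (i k : ℕ) (hik : i < k) (hkr : k < r) :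
    ∑ j, flexUpper u i k hik hkr j = ∑ j, u j := by
  rw [sum_eq_sum_range_natExtend u, ← sum_range_contract_Ico (natExtend u) (p := i)
    (Nat.lt_succ_of_lt hik) hkr, show i + 1 + (r - (k + 1)) = i + (r - k) by omega]
  refine sum_fin_eq_sum_range fun j => ?_
  unfold flexUpper
  split_ifs
  · exact (natExtend_of_lt u _).symm
  · exact sum_block_eq_sum_Ico u i (k + 1) hkr
  · rw [natExtend_of_lt u (by omega)]
    congr 2
    omega

lemma sum_flexLower {r : ℕ} (u : Fin r → ℚ) (i k : ℕ) (hi : 0 < i) (hik : i < k) (hkr : k ≤ r) :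
    ∑ j, flexLower u i k hi hik hkr j = ∑ j, u j := by
  rw [sum_eq_sum_range_natExtend u, ← sum_range_contract_Ico (natExtend u) (p := i - 1)
    (by omega) hkr, show i - 1 + 1 + (r - k) = i + (r - k) by omega]
  refine sum_fin_eq_sum_range fun j => ?_
  unfold flexLower
  split_ifs
  · exact (natExtend_of_lt u _).symm
  · exact sum_block_eq_sum_Ico u (i - 1) k hkr
  · rw [natExtend_of_lt u (by omega)]
    congr 2
    omega

namespace Generic

variable {r : ℕ} {u : Fin r → ℚ}

lemma sum_Ico_ne_zero (hu : Generic u) {p q : ℕ} (hpq : p < q) (hqr : q ≤ r) :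
    ∑ t ∈ Finset.Ico p q, natExtend u t ≠ 0 := by
  have h := hu p (q - 1) (by omega) (by omega)
  rwa [sum_block_eq_sum_Ico u p (q - 1 + 1) (by omega), Nat.sub_add_cancel (by omega)] at h

lemma ne_zero (hu : Generic u) (j : Fin r) : u j ≠ 0 := by
  simpa [natExtend_of_lt u j.2] using hu.sum_Ico_ne_zero (Nat.lt_succ_self j) j.2

lemma prod_take_ne_zero (hu : Generic u) (i : ℕ) (h : i ≤ r) : ∏ j, take u i h j ≠ 0 :=
  Finset.prod_ne_zero_iff.mpr fun _ _ => hu.ne_zero _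

lemma prod_drop_ne_zero (hu : Generic u) (i : ℕ) : ∏ j, drop u i j ≠ 0 :=
  Finset.prod_ne_zero_iff.mpr fun _ _ => hu.ne_zero _

lemma sum_take_ne_zero (hu : Generic u) {i : ℕ} (h : i ≤ r) (hi : i ≠ 0) :
    ∑ j, take u i h j ≠ 0 := by
  rw [sum_take, Finset.range_eq_Ico]
  exact hu.sum_Ico_ne_zero (Nat.pos_of_ne_zero hi) h

lemma sum_drop_ne_zero (hu : Generic u) {i : ℕ} (hi : r - i ≠ 0) : ∑ j, drop u i j ≠ 0 := by
  rw [sum_drop]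
  exact hu.sum_Ico_ne_zero (by omega) le_rfl

end Generic

lemma darInv_dur (Q : Mould) : darInv (dur Q) = dur (darInv Q) := by
  funext r u
  simp only [darInv, dur, mul_div_assoc]

lemma arit_dur (X N : Mould) : arit X (dur N) = dur (arit X N) := by
  funext r u
  simp only [arit, dur, mul_sub, Finset.mul_sum]
  congr 1 <;> refine Finset.sum_congr rfl fun i _ => Finset.sum_congr rfl fun k _ => ?_ <;>
    split_ifs
  · rw [sum_flexUpper, mul_assoc]
  · rw [mul_zero]
  · rw [sum_flexLower, mul_assoc]
  · rw [mul_zero]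

lemma dur_mu (A B : Mould) : dur (mu A B) = mu (dur A) B + mu A (dur B) := by
  funext r u
  simp only [dur, mu, Pi.add_apply, Finset.mul_sum, ← Finset.sum_add_distrib]
  refine Finset.sum_congr rfl fun i _ => ?_
  rw [← sum_take_add_sum_drop u i.1 (by omega)]
  ring

lemma dar_mu (A B : Mould) : dar (mu A B) = mu (dar A) (dar B) := by
  funext r u
  simp only [dar, mu, Finset.mul_sum]
  refine Finset.sum_congr rfl fun i _ => ?_
  rw [← prod_take_mul_prod_drop u i.1 (by omega)]
  ring

lemma dur_lu (A B : Mould) : dur (lu A B) = lu (dur A) B + lu A (dur B) := by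
  funext r u
  have hAB := congrFun (congrFun (dur_mu A B) r) u
  have hBA := congrFun (congrFun (dur_mu B A) r) u
  simp only [dur, lu, Pi.add_apply] at hAB hBA ⊢
  linear_combination hAB - hBA

lemma dar_lu (A B : Mould) : dar (lu A B) = lu (dar A) (dar B) := by
  funext r u
  simp only [dar, lu, mul_sub, ← dar_mu]

lemma lu_swap (A B : Mould) : lu B A = -lu A B := by
  funext r u
  simp only [lu, Pi.neg_apply, neg_sub]

lemma Darit_dur (P Q : Mould) :
    Darit P (dur Q) = dur (Darit P Q) - lu (delta (deltaInv P)) (dar (darInv Q)) := by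
  rw [delta, ← dar_lu]
  funext r u
  have hlu := congrFun (congrFun (dur_lu (deltaInv P) (darInv Q)) r) u
  have harit := congrFun (congrFun (arit_dur (deltaInv P) (darInv Q)) r) u
  simp only [Darit, darInv_dur, dar, dur, Pi.sub_apply, Pi.add_apply] at hlu harit ⊢
  linear_combination -(∏ j, u j) * (hlu + harit)

lemma dar_darInv_apply (Q : Mould) {s : ℕ} {v : Fin s → ℚ} (hv : ∏ j, v j ≠ 0) :
    dar (darInv Q) s v = Q s v := by
  simp only [dar, darInv]
  field_simp

lemma delta_deltaInv_apply {P : Mould} (hP : MemARI P) {s : ℕ} {v : Fin s → ℚ}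
    (hv : ∏ j, v j ≠ 0) (hsum : s ≠ 0 → ∑ j, v j ≠ 0) : delta (deltaInv P) s v = P s v := by
  simp only [delta, deltaInv, dar, dur, darInv, durInv]
  rcases Nat.eq_zero_or_pos s with rfl | hs
  · simp [hP v]
  · have := hsum hs.ne'
    field_simp

lemma mu_apply_congr {A A' B B' : Mould} {r : ℕ} (u : Fin r → ℚ)
    (hA : ∀ i (h : i ≤ r), A i (take u i h) = A' i (take u i h))
    (hB : ∀ i ≤ r, B (r - i) (drop u i) = B' (r - i) (drop u i)) :
    mu A B r u = mu A' B' r u :=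
  Finset.sum_congr rfl fun i _ => by rw [hA, hB i (by omega)]

lemma lu_delta_deltaInv_dar_darInv_apply {P : Mould} (hP : MemARI P) (Q : Mould) {r : ℕ}
    {u : Fin r → ℚ} (hu : Generic u) :
    lu (delta (deltaInv P)) (dar (darInv Q)) r u = lu P Q r u := by
  unfold lu
  congr 1 <;> apply mu_apply_congr
  · exact fun i h => delta_deltaInv_apply hP (hu.prod_take_ne_zero i h) (hu.sum_take_ne_zero h)
  · exact fun i _ => dar_darInv_apply Q (hu.prod_drop_ne_zero i)
  · exact fun i h => dar_darInv_apply Q (hu.prod_take_ne_zero i h)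
  · exact fun i _ => delta_deltaInv_apply hP (hu.prod_drop_ne_zero i) hu.sum_drop_ne_zero

end Mould

open Mould in
theorem Darit_extends_to_a_general (P Q : Mould) (hP : MemARI P) :
    ∀ (r : ℕ) (u : Fin r → ℚ), Generic u →
      Darit P (dur Q) r u = dur (Darit P Q) r u + lu Q P r u := by
  intro r u hu
  rw [Darit_dur, Pi.sub_apply, Pi.sub_apply, lu_delta_deltaInv_dar_darInv_apply hP Q hu,
    lu_swap P Q, Pi.neg_apply, Pi.neg_apply, sub_eq_add_neg]

open Mould in
/-- For all moulds `P, Q ∈ ARI`, one has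
`Darit(P)(dur(Q)) = dur(Darit(P)(Q)) + lu(Q,P)` (an equality of
rational-function valued moulds, i.e. an identity at every generic tuple).
This expresses that the derivation `Darit(P)` of `ARI_lu` extends to the extra
generator `a` (with `[Q,a] = dur(Q)`), taking the value `P` on `a`. -/
theorem Darit_extends_to_a (P Q : Mould) (hP : MemARI P) (hQ : MemARI Q) :
    ∀ (r : ℕ) (u : Fin r → ℚ), Generic u →
      Darit P (dur Q) r u = dur (Darit P Q) r u + lu Q P r u :=
  Darit_extends_to_a_general P Q hP
end

section
/- For every mould P ∈ ARI, one has Darit(P)·B₁ = 0, where B₁ is the mould concentrated in depth 1 with B₁(u_1) = u_1. -/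
namespace Mould

lemma finval_mk {n a : ℕ} (h : a < n) : ((⟨a, h⟩ : Fin n) : ℕ) = a := rfl

lemma darInv_B1_ne {n : ℕ} (hn : n ≠ 1) (w : Fin n → ℚ) : darInv B1 n w = 0 := by
  simp only [darInv, B1, dif_neg hn, zero_div]

lemma darInv_B1_one {n : ℕ} (hn : n = 1) (w : Fin n → ℚ) (hw : ∀ j, w j ≠ 0) :
    darInv B1 n w = 1 := by
  subst hn
  simp only [darInv, B1, dif_pos rfl]
  rw [Fin.prod_univ_one]
  exact div_self (hw _)

lemma deltaInv_nil (P : Mould) (w : Fin 0 → ℚ) : deltaInv P 0 w = 0 := by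
  simp [deltaInv, darInv, durInv]

lemma fin_sum_dite {r : ℕ} (u : Fin r → ℚ) (i n : ℕ) (f : Fin n → ℚ)
    (hf : ∀ m : Fin n, f m = if hm : i + m.1 < r then u ⟨i + m.1, hm⟩ else 0) :
    ∑ m, f m = ∑ m ∈ Finset.range n, if hm : i + m < r then u ⟨i + m, hm⟩ else 0 := by
  rw [← Fin.sum_univ_eq_sum_range (fun m => if hm : i + m < r then u ⟨i + m, hm⟩ else 0) n]
  exact Finset.sum_congr rfl fun m _ => hf m

lemma aux_mem {r i n : ℕ} (hn : 0 < n) (h : i + n ≤ r) (m : Fin (i + n - 1 + 1 - i)) : i + m.1 < r := by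
  have := m.2; omega

lemma gen_range_ne {r : ℕ} {u : Fin r → ℚ} (hg : Generic u) (i n : ℕ) (hn : 0 < n)
    (h : i + n ≤ r) :
    (∑ m ∈ Finset.range n, if hm : i + m < r then u ⟨i + m, hm⟩ else 0) ≠ 0 := by
  have H := hg i (i + n - 1) (by omega) (by omega)
  have e := fin_sum_dite u i (i + n - 1 + 1 - i) (fun m => u ⟨i + m.1, aux_mem hn h m⟩)
      (fun m => by rw [dif_pos (aux_mem hn h m)])
  have H2 : (∑ m ∈ Finset.range (i + n - 1 + 1 - i),
      if hm : i + m < r then u ⟨i + m, hm⟩ else 0) ≠ 0 := fun h0 => H (e.trans h0)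
  rwa [show i + n - 1 + 1 - i = n from by omega] at H2

lemma gen_fin_sum_ne {r : ℕ} {u : Fin r → ℚ} (hg : Generic u) (i n : ℕ) (hn : 0 < n)
    (h : i + n ≤ r) (f : Fin n → ℚ)
    (hf : ∀ m : Fin n, f m = if hm : i + m.1 < r then u ⟨i + m.1, hm⟩ else 0) :
    (∑ m, f m) ≠ 0 := by
  rw [fin_sum_dite u i n f hf]
  exact gen_range_ne hg i n hn h

lemma gen_letter_ne {r : ℕ} {u : Fin r → ℚ} (hg : Generic u) (p : ℕ) (hp : p < r) :
    u ⟨p, hp⟩ ≠ 0 := by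
  have H := gen_range_ne hg p 1 one_pos (by omega)
  rw [Finset.sum_range_one, dif_pos (show p + 0 < r by omega)] at H
  exact H

end Mould

open Mould in
/-- For every mould `P ∈ ARI`, one has `Darit(P)·B₁ = 0`,
where `B₁` is the mould concentrated in depth 1 with `B₁(u_1) = u_1`
(an equality of rational-function valued moulds, i.e. an identity at every
generic tuple). -/
theorem Darit_B1_eq_zero (P : Mould) (hP : MemARI P) :
    ∀ (r : ℕ) (u : Fin r → ℚ), Generic u → Darit P B1 r u = 0 := by
  intro r u hg
  suffices h : arit (deltaInv P) (darInv B1) r u = lu (deltaInv P) (darInv B1) r u by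
    simp only [Darit, dar]
    rw [h, sub_self, mul_zero, neg_zero]
  match r, u, hg with
  | 0, u, hg =>
    simp [arit, lu, mu, darInv_B1_ne]
  | 1, u, hg =>
    simp [arit, lu, mu, Fin.sum_univ_two, darInv_B1_ne, deltaInv_nil]
  | (s+2), u, hg =>
    have harit : arit (deltaInv P) (darInv B1) (s+2) u
        = deltaInv P (s+1) (take u (s+1) (by omega)) - deltaInv P (s+2-1) (drop u 1) := by
      simp only [arit]
      congr 1
      · -- first double sum : only (i,k) = (0, s+1) contributes
        rw [Fintype.sum_eq_single (⟨0, by omega⟩ : Fin (s+2+1))]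
        · rw [Fintype.sum_eq_single (⟨s+1, by omega⟩ : Fin (s+2+1))]
          · simp only [finval_mk]
            rw [dif_pos (show (0:ℕ) < s+1 ∧ s+1 < s+2 from ⟨by omega, by omega⟩)]
            rw [darInv_B1_one (show 0 + (s+2 - (s+1)) = 1 by omega), one_mul]
            · exact congrArg (deltaInv P (s+1)) (funext fun m =>
                congrArg u (Fin.ext (Nat.zero_add m.1)))
            · intro j
              have hj : j.1 = 0 := by have := j.2; omega
              simp only [flexUpper]
              rw [dif_neg (by omega), dif_pos hj]
              exact gen_fin_sum_ne hg 0 (s+1+1-0) (by omega) (by omega) _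
                (fun m => by rw [dif_pos (show 0 + m.1 < s+2 by have := m.2; omega)])
          · intro k hk
            simp only [finval_mk]
            split_ifs with hc
            · have hkv : k.1 ≠ s+1 := fun hh => hk (Fin.ext hh)
              rw [darInv_B1_ne (by omega), zero_mul]
            · rfl
        · intro b hb
          apply Finset.sum_eq_zero
          intro k _
          split_ifs with hc
          · have hbv : b.1 ≠ 0 := fun hh => hb (Fin.ext hh)
            rw [darInv_B1_ne (by omega), zero_mul]
          · rfl
      · -- second double sum : only (i,k) = (1, s+2) contributes
        rw [Fintype.sum_eq_single (⟨1, by omega⟩ : Fin (s+2+1))]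
        · rw [Fintype.sum_eq_single (⟨s+2, by omega⟩ : Fin (s+2+1))]
          · simp only [finval_mk]
            rw [dif_pos (show (0:ℕ) < 1 ∧ 1 < s+2 ∧ s+2 ≤ s+2 from ⟨by omega, by omega, by omega⟩)]
            rw [darInv_B1_one (show 1 + (s+2 - (s+2)) = 1 by omega), one_mul]
            · rfl
            · intro j
              have hj : j.1 = 0 := by have := j.2; omega
              simp only [flexLower]
              rw [dif_neg (by omega), dif_pos (by omega)]
              exact gen_fin_sum_ne hg 0 (s+2-(1-1)) (by omega) (by omega) _
                (fun m => by rw [dif_pos (show 0 + m.1 < s+2 by have := m.2; omega)])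
          · intro k hk
            simp only [finval_mk]
            split_ifs with hc
            · have hkv : k.1 ≠ s+2 := fun hh => hk (Fin.ext hh)
              have := k.2
              rw [darInv_B1_ne (by omega), zero_mul]
            · rfl
        · intro b hb
          apply Finset.sum_eq_zero
          intro k _
          split_ifs with hc
          · have hbv : b.1 ≠ 1 := fun hh => hb (Fin.ext hh)
            have := k.2
            rw [darInv_B1_ne (by omega), zero_mul]
          · rfl
    have hlu : lu (deltaInv P) (darInv B1) (s+2) u
        = deltaInv P (s+1) (take u (s+1) (by omega)) - deltaInv P (s+2-1) (drop u 1) := by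
      simp only [lu, mu]
      congr 1
      · rw [Fintype.sum_eq_single (⟨s+1, by omega⟩ : Fin (s+2+1))]
        · simp only [finval_mk]
          rw [darInv_B1_one (show s+2 - (s+1) = 1 by omega), mul_one]
          intro j
          exact gen_letter_ne hg (s+1+j.1) (by have := j.2; omega)
        · intro b hb
          have hbv : b.1 ≠ s+1 := fun hh => hb (Fin.ext hh)
          have := b.2
          rw [darInv_B1_ne (by omega), mul_zero]
      · rw [Fintype.sum_eq_single (⟨1, by omega⟩ : Fin (s+2+1))]
        · simp only [finval_mk]
          rw [darInv_B1_one rfl, one_mul]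
          intro j
          exact gen_letter_ne hg j.1 (by have := j.2; omega)
        · intro b hb
          have hbv : b.1 ≠ 1 := fun hh => hb (Fin.ext hh)
          rw [darInv_B1_ne (by omega), zero_mul]
    rw [harit, hlu]
end

section
/- For every mould P ∈ ARI and every depth r ≥ 2, one has (Darit(P)·B)(u_1,…,u_r) = (P(u_1,…,u_{r−1}) − P(u_2,…,u_r))/(u_1+⋯+u_r), and (Darit(P)·B)(u_1) = 0 in depth 1, where B is the mould concentrated in depth 1 with B(u_1) = 1. -/
section DaritAux
open Mould

private lemma darBm_zero (n : ℕ) (hn : n ≠ 1) (w : Fin n → ℚ) : darInv Bm n w = 0 := by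
  simp [darInv, Bm, hn]

private lemma darBm_one {n : ℕ} (hn : n = 1) (w : Fin n → ℚ) :
    darInv Bm n w = 1 / w ⟨0, by omega⟩ := by
  subst hn; simp [darInv, Bm]

private lemma deltaInv_def (P : Mould) (n : ℕ) (v : Fin n → ℚ) :
    deltaInv P n v = P n v / (∑ j, v j) / (∏ j, v j) := rfl

private lemma double_single {n : ℕ} (f : Fin n → Fin n → ℚ) (a b : Fin n)
    (h0 : ∀ i k : Fin n, i ≠ a ∨ k ≠ b → f i k = 0) :
    (∑ i, ∑ k, f i k) = f a b := by
  rw [Finset.sum_eq_single_of_mem a (Finset.mem_univ a)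
    (fun i _ hi => Finset.sum_eq_zero fun k _ => h0 i k (Or.inl hi))]
  exact Finset.sum_eq_single_of_mem b (Finset.mem_univ b)
    (fun k _ hk => h0 a k (Or.inr hk))

private lemma sum_cast {a b : ℕ} (h : a = b) (g : Fin a → ℚ) :
    (∑ j, g j) = ∑ j : Fin b, g ⟨j.1, h ▸ j.2⟩ := by
  subst h; exact Finset.sum_congr rfl fun j _ => by simp

private lemma generic_ne {r : ℕ} {u : Fin r → ℚ} (h : Generic u) (j : Fin r) : u j ≠ 0 := by
  have H := h j.1 j.1 le_rfl j.2
  intro hz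
  apply H
  rw [sum_cast (show j.1 + 1 - j.1 = 1 by omega), Fin.sum_univ_one]
  exact (congrArg u (Fin.ext (by simp))).trans hz

private lemma key_alg (A B S Si St Pi Pt Pu u0 uL : ℚ)
    (hS : S ≠ 0) (hSi : Si ≠ 0) (hSt : St ≠ 0) (hPi : Pi ≠ 0) (hPt : Pt ≠ 0)
    (hu0 : u0 ≠ 0) (huL : uL ≠ 0)
    (h1 : Si = S - uL) (h2 : St = S - u0) (h3 : Pu = Pi * uL) (h4 : Pu = u0 * Pt) :
    -(Pu * (1/S * (A/Si/Pi) - 1/S * (B/St/Pt) - ((A/Si/Pi) * (1/uL) - 1/u0 * (B/St/Pt))))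
      = (A - B)/S := by
  have e1 : Pu * (1/S * (A/Si/Pi)) = uL * A / (S * Si) := by
    rw [h3]; field_simp
  have e2 : Pu * (1/S * (B/St/Pt)) = u0 * B / (S * St) := by
    rw [h4]; field_simp
  have e3 : Pu * ((A/Si/Pi) * (1/uL)) = A / Si := by
    rw [h3]; field_simp
  have e4 : Pu * (1/u0 * (B/St/Pt)) = B / St := by
    rw [h4]; field_simp
  have expand : -(Pu * (1/S * (A/Si/Pi) - 1/S * (B/St/Pt)
        - ((A/Si/Pi) * (1/uL) - 1/u0 * (B/St/Pt))))
      = -(Pu * (1/S * (A/Si/Pi))) + Pu * (1/S * (B/St/Pt)) + Pu * ((A/Si/Pi) * (1/uL))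
        - Pu * (1/u0 * (B/St/Pt)) := by
    ring
  rw [expand, e1, e2, e3, e4, h1, h2]
  have hL : S - uL ≠ 0 := h1 ▸ hSi
  have h0 : S - u0 ≠ 0 := h2 ▸ hSt
  field_simp
  ring

end DaritAux

open Mould in
/-- For every mould `P ∈ ARI` and every depth `r ≥ 2`, one has
`(Darit(P)·B)(u_1,…,u_r) = (P(u_1,…,u_{r−1}) − P(u_2,…,u_r))/(u_1+⋯+u_r)`
(an identity of rational functions, i.e. an identity at every generic tuple),
and `(Darit(P)·B)(u_1) = 0` in depth 1, where `B` is the mould concentrated in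
depth 1 with `B(u_1) = 1`. -/
theorem Darit_B_formula (P : Mould) (hP : MemARI P) :
    (∀ (r : ℕ), 2 ≤ r → ∀ u : Fin r → ℚ, Generic u →
      Darit P Bm r u = (P (r - 1) (init u) - P (r - 1) (tail u)) / (∑ k, u k)) ∧
    (∀ u : Fin 1 → ℚ, Darit P Bm 1 u = 0) := by
  constructor
  · intro r hr u hgen
    obtain ⟨s, rfl⟩ : ∃ s, r = s + 2 := ⟨r - 2, by omega⟩
    have hu0 : u ⟨0, by omega⟩ ≠ 0 := generic_ne hgen _
    have huL : u ⟨s + 1, by omega⟩ ≠ 0 := generic_ne hgen _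
    have hS : (∑ j, u j) ≠ 0 := by
      intro hz
      apply hgen 0 (s + 1) (by omega) (by omega)
      rw [← hz]
      exact Finset.sum_congr rfl fun m _ => congrArg u (Fin.ext (by simp))
    have hSi : (∑ j : Fin (s + 1), Mould.init u j) ≠ 0 := by
      intro hz
      apply hgen 0 s (by omega) (by omega)
      rw [← hz]
      exact Finset.sum_congr rfl fun m _ => congrArg u (Fin.ext (by simp))
    have hSt : (∑ j : Fin (s + 1), Mould.tail u j) ≠ 0 := by
      intro hz
      apply hgen 1 (s + 1) (by omega) (by omega)
      rw [← hz]
      exact Finset.sum_congr rfl fun m _ => congrArg u (Fin.ext (by simp))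
    have hPi : (∏ j : Fin (s + 1), Mould.init u j) ≠ 0 :=
      Finset.prod_ne_zero_iff.mpr fun j _ => generic_ne hgen ⟨j.1, by omega⟩
    have hPt : (∏ j : Fin (s + 1), Mould.tail u j) ≠ 0 :=
      Finset.prod_ne_zero_iff.mpr fun j _ => generic_ne hgen ⟨1 + j.1, by omega⟩
    have hsi : (∑ j : Fin (s + 1), Mould.init u j) = (∑ j, u j) - u ⟨s + 1, by omega⟩ := by
      rw [show (∑ j : Fin (s + 1), Mould.init u j) = ∑ i : Fin (s + 1), u i.castSucc from
        Finset.sum_congr rfl fun m _ => congrArg u (Fin.ext (by simp)),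
        Fin.sum_univ_castSucc (f := u)]
      rw [show u (Fin.last (s + 1)) = u ⟨s + 1, by omega⟩ from rfl]
      ring
    have hst : (∑ j : Fin (s + 1), Mould.tail u j) = (∑ j, u j) - u ⟨0, by omega⟩ := by
      rw [show (∑ j : Fin (s + 1), Mould.tail u j) = ∑ i : Fin (s + 1), u i.succ from
        Finset.sum_congr rfl fun m _ => congrArg u (Fin.ext (by simp [Nat.add_comm])),
        Fin.sum_univ_succ (f := u)]
      rw [show u (0 : Fin (s + 2)) = u ⟨0, by omega⟩ from rfl]
      ring
    have hpu : (∏ j, u j) = (∏ j : Fin (s + 1), Mould.init u j) * u ⟨s + 1, by omega⟩ := by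
      rw [show (∏ j : Fin (s + 1), Mould.init u j) = ∏ i : Fin (s + 1), u i.castSucc from
        Finset.prod_congr rfl fun m _ => congrArg u (Fin.ext (by simp)),
        Fin.prod_univ_castSucc (f := u)]
      rfl
    have hpt : (∏ j : Fin (s + 1), Mould.tail u j) = (∏ j : Fin (s + 1), Mould.init u j) * u ⟨s + 1, by omega⟩ / u ⟨0, by omega⟩ := by
      rw [eq_div_iff hu0, ← hpu,
        show (∏ j, u j) = u (0 : Fin (s + 2)) * ∏ i : Fin (s + 1), u i.succ from
          Fin.prod_univ_succ (f := u),
        show (∏ j : Fin (s + 1), Mould.tail u j) = ∏ i : Fin (s + 1), u i.succ from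
          Finset.prod_congr rfl fun m _ => congrArg u (Fin.ext (by simp [Nat.add_comm]))]
      rw [show u (0 : Fin (s + 2)) = u ⟨0, by omega⟩ from rfl]
      ring
    have hlu : lu (deltaInv P) (darInv Bm) (s + 2) u
        = deltaInv P (s + 1) (Mould.init u) * (1 / u ⟨s + 1, by omega⟩)
          - 1 / u ⟨0, by omega⟩ * deltaInv P (s + 1) (Mould.tail u) := by
      simp only [Mould.lu, Mould.mu]
      rw [Finset.sum_eq_single_of_mem (⟨s + 1, by omega⟩ : Fin (s + 2 + 1))
        (Finset.mem_univ _) ?_, Finset.sum_eq_single_of_mem (⟨1, by omega⟩ : Fin (s + 2 + 1))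
        (Finset.mem_univ _) ?_]
      · rw [darBm_one (show s + 2 - (s + 1) = 1 by omega),
          darBm_one (show (1 : ℕ) = 1 from rfl)]
        rw [show (Mould.drop u (s + 1)) ⟨0, by omega⟩
            = u ⟨s + 1, by omega⟩ from congrArg u (Fin.ext (by simp)),
          show (Mould.take u 1 (by omega)) ⟨0, by omega⟩
            = u ⟨0, by omega⟩ from rfl]
        rfl
      · intro b _ hb
        rw [darBm_zero _ (by have := b.2; have : b.1 ≠ 1 := fun h => hb (Fin.ext h); omega),
          zero_mul]
      · intro b _ hb
        rw [darBm_zero _ (by have := b.2; have : b.1 ≠ s + 1 := fun h => hb (Fin.ext h); omega),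
          mul_zero]
    have eU : Mould.flexUpper u 0 (s + 1) (by omega) (by omega) ⟨0, by omega⟩ = ∑ j, u j := by
      rw [Mould.flexUpper, dif_neg (by omega), dif_pos rfl]
      exact Finset.sum_congr rfl fun m _ => congrArg u (Fin.ext (by simp))
    have eL : Mould.flexLower u 1 (s + 2) (by omega) (by omega) (by omega) ⟨0, by omega⟩
        = ∑ j, u j := by
      rw [Mould.flexLower, dif_neg (by omega), dif_pos rfl]
      exact Finset.sum_congr rfl fun m _ => congrArg u (Fin.ext (by simp))
    have eA : deltaInv P (s + 1 - 0) (Mould.blockWord u 0 (s + 1) (by omega))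
        = deltaInv P (s + 1) (Mould.init u) := by
      show deltaInv P (s + 1) (Mould.blockWord u 0 (s + 1) (by omega)) = _
      exact congrArg _ (funext fun j => congrArg u (Fin.ext (by simp)))
    have eB : deltaInv P (s + 2 - 1) (Mould.blockWord u 1 (s + 2) (by omega))
        = deltaInv P (s + 1) (Mould.tail u) := rfl
    have harit : arit (deltaInv P) (darInv Bm) (s + 2) u
        = 1 / (∑ j, u j) * deltaInv P (s + 1) (Mould.init u)
          - 1 / (∑ j, u j) * deltaInv P (s + 1) (Mould.tail u) := by
      simp only [Mould.arit]
      rw [double_single _ (⟨0, by omega⟩ : Fin (s + 2 + 1)) (⟨s + 1, by omega⟩ : Fin (s + 2 + 1))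
          ?_,
        double_single _ (⟨1, by omega⟩ : Fin (s + 2 + 1)) (⟨s + 2, by omega⟩ : Fin (s + 2 + 1))
          ?_]
      · dsimp only
        rw [dif_pos (show (0 : ℕ) < s + 1 ∧ s + 1 < s + 2 by omega),
          dif_pos (show (0 : ℕ) < 1 ∧ 1 < s + 2 ∧ s + 2 ≤ s + 2 by omega),
          darBm_one (show 0 + (s + 2 - (s + 1)) = 1 by omega),
          darBm_one (show 1 + (s + 2 - (s + 2)) = 1 by omega)]
        rw [eU, eL, eA, eB]
      · intro i k hik
        split
        · rename_i h
          rw [darBm_zero _ ?_, zero_mul]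
          have hi2 := i.2
          have hk2 := k.2
          rcases hik with h0 | h0
          · have : i.1 ≠ 1 := fun hh => h0 (Fin.ext hh); omega
          · have : k.1 ≠ s + 2 := fun hh => h0 (Fin.ext hh); omega
        · rfl
      · intro i k hik
        split
        · rename_i h
          rw [darBm_zero _ ?_, zero_mul]
          have hi2 := i.2
          have hk2 := k.2
          rcases hik with h0 | h0
          · have : i.1 ≠ 0 := fun hh => h0 (Fin.ext hh); omega
          · have : k.1 ≠ s + 1 := fun hh => h0 (Fin.ext hh); omega
        · rfl
    simp only [Mould.Darit, Mould.dar]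
    rw [harit, hlu, deltaInv_def, deltaInv_def]
    have h4 : (∏ j, u j) = u ⟨0, by omega⟩ * ∏ j : Fin (s + 1), Mould.tail u j := by
      rw [hpt, hpu, mul_comm (u ⟨0, by omega⟩), div_mul_cancel₀ _ hu0]
    show _ = (P (s + 1) (Mould.init u) - P (s + 1) (Mould.tail u)) / ∑ k, u k
    exact key_alg _ _ _ _ _ _ _ _ _ _ hS hSi hSt hPi hPt hu0 huL hsi hst hpu h4
  · intro u
    simp only [Mould.Darit, Mould.dar]
    have harit : arit (deltaInv P) (darInv Bm) 1 u = 0 := by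
      simp [Mould.arit, Fin.sum_univ_two]
    have hlu : lu (deltaInv P) (darInv Bm) 1 u = 0 := by
      simp [Mould.lu, Mould.mu, Fin.sum_univ_two, Mould.deltaInv, Mould.darInv,
        Mould.durInv, Mould.Bm, hP _]
    rw [harit, hlu]
    ring
end

section
/- Let P ∈ ARI be a polynomial-valued mould. Then the mould Darit(P)·B is polynomial-valued if and only if P is push-invariant, where B is the mould concentrated in depth 1 with B(u_1) = 1. -/
/-! At generic points of depth `r + 2`, `Darit(P)·B` equals
`(P(u_1,…,u_{r+1}) − P(u_2,…,u_{r+2})) / (u_1 + ⋯ + u_{r+2})`; in depths `0` and `1` it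
vanishes. Since generic tuples are Zariski dense, this is a polynomial iff the linear form
`u_1 + ⋯ + u_{r+2}` divides the numerator, i.e. iff the numerator vanishes on the hyperplane
`u_1 + ⋯ + u_{r+2} = 0`. There `u_1 = −u_2 − ⋯ − u_{r+2}`, which turns the vanishing into
`push(P) = P` in depth `r + 1`. -/

namespace MvPolynomial

variable {R : Type*} [CommRing R] [IsDomain R] [Infinite R]

theorem eq_zero_of_eval_eq_zero_of_eval_ne_zero {σ : Type*} {f g : MvPolynomial σ R}
    (hg : g ≠ 0) (h : ∀ u, eval u g ≠ 0 → eval u f = 0) : f = 0 := by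
  have hfg : f * g = 0 := MvPolynomial.funext fun u => by
    by_cases hu : eval u g = 0 <;> simp [hu, h]
  exact (mul_eq_zero.mp hfg).resolve_right hg

theorem sum_X_dvd_of_eval_eq_zero {n : ℕ} (f : MvPolynomial (Fin (n + 1)) R)
    (h : ∀ u : Fin (n + 1) → R, ∑ i, u i = 0 → eval u f = 0) :
    (∑ i, X i : MvPolynomial (Fin (n + 1)) R) ∣ f := by
  set c : MvPolynomial (Fin n) R := ∑ i, X i
  have hsum : finSuccEquiv R n (∑ i, X i) = Polynomial.X - Polynomial.C (-c) := by
    simp [c, Fin.sum_univ_succ, finSuccEquiv_X_zero, finSuccEquiv_X_succ]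
  have hroot : (finSuccEquiv R n f).IsRoot (-c) := by
    refine MvPolynomial.funext fun w => ?_
    rw [map_zero, ← Polynomial.eval_map_apply, map_neg, ← eval_eq_eval_mv_eval']
    exact h _ (by simp [c, Fin.sum_univ_succ])
  rw [← map_dvd_iff (finSuccEquiv R n), hsum]
  exact Polynomial.dvd_iff_isRoot.mpr hroot

end MvPolynomial

namespace Mould

open MvPolynomial

section Words

variable {s : ℕ}

theorem init_eq_comp_castSucc (u : Fin (s + 1) → ℚ) : init u = u ∘ Fin.castSucc := rfl

theorem tail_eq_comp_succ (u : Fin (s + 1) → ℚ) : tail u = u ∘ Fin.succ :=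
  funext fun _ => congrArg u (Fin.ext (Nat.add_comm _ _))

theorem sum_init (u : Fin (s + 1) → ℚ) :
    ∑ j : Fin s, init u j = ∑ j, u j - u (Fin.last s) :=
  eq_sub_of_add_eq (Fin.sum_univ_castSucc u).symm

theorem sum_tail (u : Fin (s + 1) → ℚ) : ∑ j : Fin s, tail u j = ∑ j, u j - u 0 := by
  rw [tail_eq_comp_succ, Fin.sum_univ_succ, add_sub_cancel_left]; rfl

theorem prod_init_mul_last (u : Fin (s + 1) → ℚ) :
    (∏ j : Fin s, init u j) * u (Fin.last s) = ∏ j, u j :=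
  (Fin.prod_univ_castSucc u).symm

theorem head_mul_prod_tail (u : Fin (s + 1) → ℚ) :
    u 0 * ∏ j : Fin s, tail u j = ∏ j, u j := by
  rw [tail_eq_comp_succ, Fin.prod_univ_succ]; rfl

theorem tail_cons (a : ℚ) (v : Fin (s + 1) → ℚ) :
    tail (Fin.cons a v : Fin (s + 2) → ℚ) = v := by
  rw [tail_eq_comp_succ, Fin.cons_comp_succ]

end Words

section Generic

variable {r s : ℕ}

theorem Generic.ne_zero_s7 {u : Fin r → ℚ} (hu : Generic u) (i : Fin r) : u i ≠ 0 := by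
  have := hu i i le_rfl i.2
  rwa [Finset.sum_eq_single ⟨0, by omega⟩ (fun m _ hm => absurd (Fin.ext (by omega)) hm)
    (by simp)] at this

theorem Generic.sum_ne_zero {u : Fin (s + 1) → ℚ} (hu : Generic u) : ∑ j, u j ≠ 0 := by
  convert hu 0 s s.zero_le s.lt_succ_self using 3 with j
  simp

theorem Generic.init {u : Fin (s + 1) → ℚ} (hu : Generic u) : Generic (init u) :=
  fun i j hij hj => hu i j hij (by omega)

theorem Generic.sum_tail_ne_zero {u : Fin (s + 2) → ℚ} (hu : Generic u) :
    ∑ j, tail u j ≠ 0 :=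
  hu 1 (s + 1) (by omega) (by omega)

/-- The product of all block sums, a polynomial vanishing exactly off the generic tuples. -/
noncomputable def genericDenom (r : ℕ) : MvPolynomial (Fin r) ℚ :=
  ∏ p : Fin r × Fin r, if p.1 ≤ p.2 then
    ∑ m : Fin (p.2.1 + 1 - p.1.1), X ⟨p.1.1 + m.1, by have := m.2; have := p.2.2; omega⟩
  else 1

theorem genericDenom_ne_zero (r : ℕ) : genericDenom r ≠ 0 := by
  refine Finset.prod_ne_zero_iff.mpr fun p _ => ?_
  split_ifs with hp
  · intro h
    have : p.2.1 + 1 - p.1.1 = 0 := by simpa using congrArg (eval fun _ => (1 : ℚ)) h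
    omega
  · exact one_ne_zero

theorem generic_of_eval_genericDenom_ne_zero {u : Fin r → ℚ}
    (hu : eval u (genericDenom r) ≠ 0) : Generic u := fun i j hij hj hsum =>
  hu <| by
    rw [genericDenom, map_prod]
    refine Finset.prod_eq_zero (Finset.mem_univ (⟨i, by omega⟩, ⟨j, hj⟩)) ?_
    simpa [hij] using hsum

theorem eq_zero_of_eval_generic_eq_zero {f : MvPolynomial (Fin r) ℚ}
    (h : ∀ u : Fin r → ℚ, Generic u → eval u f = 0) : f = 0 :=
  eq_zero_of_eval_eq_zero_of_eval_ne_zero (genericDenom_ne_zero r) fun _ hu =>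
    h _ (generic_of_eval_genericDenom_ne_zero hu)

end Generic

section Darit

variable {s : ℕ}

theorem darInv_Bm_of_ne_one {n : ℕ} (hn : n ≠ 1) (v : Fin n → ℚ) : darInv Bm n v = 0 := by
  simp [darInv, Bm, hn]

theorem darInv_Bm_of_eq_one {n : ℕ} (hn : n = 1) (v : Fin n → ℚ) :
    darInv Bm n v = (v ⟨0, by omega⟩)⁻¹ := by
  subst hn
  simp [darInv, Bm]

theorem mu_darInv_Bm (A : Mould) (u : Fin (s + 2) → ℚ) :
    mu A (darInv Bm) (s + 2) u = A (s + 1) (init u) / u (Fin.last (s + 1)) := by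
  rw [mu, Fintype.sum_eq_single ⟨s + 1, by omega⟩ fun i hi => ?_]
  · rw [darInv_Bm_of_eq_one (by simp), div_eq_mul_inv]
    rfl
  · rw [darInv_Bm_of_ne_one (fun h => hi (Fin.ext (show i.1 = s + 1 by omega))), mul_zero]

theorem darInv_Bm_mu (A : Mould) (u : Fin (s + 2) → ℚ) :
    mu (darInv Bm) A (s + 2) u = (u 0)⁻¹ * A (s + 1) (tail u) := by
  rw [mu, Fintype.sum_eq_single 1 fun i hi => ?_]
  · rw [darInv_Bm_of_eq_one (Fin.val_one _)]
    rfl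
  · rw [darInv_Bm_of_ne_one (fun h => hi (Fin.ext h)), zero_mul]

theorem dite_darInv_Bm_mul_eq_zero {p : Prop} [Decidable p] {n : ℕ} (hn : p → n ≠ 1)
    (v : p → Fin n → ℚ) (w : p → ℚ) :
    (if h : p then darInv Bm n (v h) * w h else 0) = 0 := by
  split_ifs with h
  · rw [darInv_Bm_of_ne_one (hn h), zero_mul]
  · rfl

-- `darInv Bm` is concentrated in depth `1`, so only `b = (u_1,…,u_{s+1})` survives in the first
-- sum of `arit` and only `b = (u_2,…,u_{s+2})` in the second.
theorem arit_darInv_Bm (A : Mould) (u : Fin (s + 2) → ℚ) :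
    arit A (darInv Bm) (s + 2) u = (A (s + 1) (init u) - A (s + 1) (tail u)) / ∑ j, u j := by
  rw [arit, sub_div]
  congr 1
  · rw [Fintype.sum_eq_single 0, Fintype.sum_eq_single ⟨s + 1, by omega⟩]
    · rw [dif_pos ⟨by simp, by simp⟩, darInv_Bm_of_eq_one (by simp)]
      have hflex : flexUpper u 0 (s + 1) (by simp) (by simp) ⟨0, by simp⟩ = ∑ j, u j := by
        simp [flexUpper]
      have hblock : blockWord u 0 (s + 1) (by simp) = init u := by
        funext j; simp [blockWord, init, take]
      simp only [Fin.val_zero, hflex, hblock]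
      rw [div_eq_inv_mul]
      rfl
    · intro k hk
      rw [ne_eq, Fin.ext_iff] at hk
      exact dite_darInv_Bm_mul_eq_zero
        (fun h => by simp only [Fin.val_zero] at h hk ⊢; omega) _ _
    · intro i hi
      have hi : 0 < i.1 := Fin.pos_iff_ne_zero.mpr hi
      exact Finset.sum_eq_zero fun k _ => dite_darInv_Bm_mul_eq_zero (fun h => by omega) _ _
  · rw [Fintype.sum_eq_single 1, Fintype.sum_eq_single (Fin.last (s + 2))]
    · rw [dif_pos ⟨by simp, by simp, by simp⟩, darInv_Bm_of_eq_one (by simp)]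
      have hflex :
          flexLower u 1 (s + 2) (by simp) (by simp) (by simp) ⟨0, by simp⟩ = ∑ j, u j := by
        simp [flexLower]
      simp only [Fin.val_one, Fin.val_last, hflex]
      rw [div_eq_inv_mul]
      rfl
    · intro k hk
      rw [ne_eq, Fin.ext_iff] at hk
      exact dite_darInv_Bm_mul_eq_zero
        (fun h => by simp only [Fin.val_one, Fin.val_last] at h hk ⊢; omega) _ _
    · intro i hi
      rw [ne_eq, Fin.ext_iff] at hi
      exact Finset.sum_eq_zero fun k _ =>
        dite_darInv_Bm_mul_eq_zero (fun h => by simp only [Fin.val_one] at h hi; omega) _ _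

theorem Darit_Bm_of_generic (P : Mould) {u : Fin (s + 2) → ℚ} (hu : Generic u) :
    Darit P Bm (s + 2) u = (P (s + 1) (init u) - P (s + 1) (tail u)) / ∑ j, u j := by
  have hx := hu.ne_zero_s7 0
  have hy := hu.ne_zero_s7 (Fin.last (s + 1))
  have hS := hu.sum_ne_zero
  have hSinit : ∑ j, u j - u (Fin.last (s + 1)) ≠ 0 := by
    rw [← sum_init]; exact hu.init.sum_ne_zero
  have hStail : ∑ j, u j - u 0 ≠ 0 := by
    rw [← sum_tail]; exact hu.sum_tail_ne_zero
  have hprod : ∏ j, u j ≠ 0 := Finset.prod_ne_zero_iff.mpr fun j _ => hu.ne_zero_s7 j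
  have hprodInit : ∏ j : Fin (s + 1), init u j = (∏ j, u j) / u (Fin.last (s + 1)) :=
    eq_div_of_mul_eq hy (prod_init_mul_last u)
  have hprodTail : ∏ j : Fin (s + 1), tail u j = (∏ j, u j) / u 0 :=
    eq_div_of_mul_eq hx (by rw [mul_comm, head_mul_prod_tail])
  simp only [Darit, dar, lu, arit_darInv_Bm, mu_darInv_Bm, darInv_Bm_mu, deltaInv, darInv,
    durInv, sum_init, sum_tail, hprodInit, hprodTail]
  field_simp
  ring

theorem Darit_Bm_zero (P : Mould) (u : Fin 0 → ℚ) : Darit P Bm 0 u = 0 := by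
  simp [Darit, dar, arit, lu, mu, deltaInv, darInv, durInv, Bm]

-- `deltaInv` divides by the empty sum `0` in depth `0`, so `P 0` does not contribute here.
theorem Darit_Bm_one (P : Mould) (u : Fin 1 → ℚ) : Darit P Bm 1 u = 0 := by
  simp [Darit, dar, arit, lu, mu, Bm, darInv, deltaInv, durInv, Fin.sum_univ_succ]

end Darit

theorem push_apply_tail (P : Mould) {s : ℕ} {u : Fin (s + 2) → ℚ} (hu : ∑ j, u j = 0) :
    push P (s + 1) (tail u) = P (s + 1) (init u) := by
  unfold push
  congr 1
  funext j
  split_ifs with hj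
  · rw [sum_tail, hu, zero_sub, neg_neg]
    exact congrArg u (Fin.ext hj.symm)
  · exact congrArg u (Fin.ext (show 1 + (j.1 - 1) = j.1 by omega))

theorem IsPolynomial.exists_eval_eq_init_sub_tail {P : Mould} (hP : IsPolynomial P) (s : ℕ) :
    ∃ f : MvPolynomial (Fin (s + 2)) ℚ,
      ∀ u, eval u f = P (s + 1) (init u) - P (s + 1) (tail u) := by
  obtain ⟨p, hp⟩ := hP (s + 1)
  refine ⟨rename Fin.castSucc p - rename Fin.succ p, fun u => ?_⟩
  rw [map_sub, eval_rename, eval_rename, ← init_eq_comp_castSucc, ← tail_eq_comp_succ, hp,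
    hp]

end Mould

open Mould in
theorem Darit_B_polynomial_iff_push_invariant_general (P : Mould)
    (hPpol : IsPolynomial P) :
    (∀ r : ℕ, ∃ q : MvPolynomial (Fin r) ℚ, ∀ u : Fin r → ℚ, Generic u →
        Darit P Bm r u = MvPolynomial.eval u q) ↔
      (∀ (r : ℕ) (u : Fin r → ℚ), push P r u = P r u) := by
  have eval_sum_X : ∀ {r : ℕ} (u : Fin r → ℚ),
      MvPolynomial.eval u (∑ j, MvPolynomial.X j) = ∑ j, u j := fun u => by simp
  constructor
  · intro hDarit r v
    rcases r with _ | s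
    · exact congrArg (P 0) (Subsingleton.elim _ _)
    obtain ⟨q, hq⟩ := hDarit (s + 2)
    obtain ⟨f, hf⟩ := hPpol.exists_eval_eq_init_sub_tail s
    have hfq : f = (∑ j, MvPolynomial.X j) * q :=
      sub_eq_zero.mp <| eq_zero_of_eval_generic_eq_zero fun u hu => by
        rw [map_sub, map_mul, hf, eval_sum_X, ← hq u hu, Darit_Bm_of_generic P hu,
          mul_div_cancel₀ _ hu.sum_ne_zero, sub_self]
    set u : Fin (s + 2) → ℚ := Fin.cons (-∑ k, v k) v
    have hu : ∑ j, u j = 0 := by simp [u, Fin.sum_univ_succ]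
    have htail : tail u = v := tail_cons _ v
    have hinit : P (s + 1) (init u) = P (s + 1) (tail u) := by
      rw [← sub_eq_zero, ← hf, hfq, map_mul, eval_sum_X, hu, zero_mul]
    rw [← htail, push_apply_tail P hu, hinit]
  · intro hpush r
    rcases r with _ | _ | s
    · exact ⟨0, fun u _ => by rw [Darit_Bm_zero, map_zero]⟩
    · exact ⟨0, fun u _ => by rw [Darit_Bm_one, map_zero]⟩
    obtain ⟨f, hf⟩ := hPpol.exists_eval_eq_init_sub_tail s
    obtain ⟨q, rfl⟩ := MvPolynomial.sum_X_dvd_of_eval_eq_zero f fun u hu => by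
      rw [hf, ← push_apply_tail P hu, hpush, sub_self]
    refine ⟨q, fun u hu => ?_⟩
    rw [Darit_Bm_of_generic P hu, ← hf, map_mul, eval_sum_X,
      mul_div_cancel_left₀ _ hu.sum_ne_zero]

open Mould in
/-- Let `P ∈ ARI` be a polynomial-valued mould. Then the mould
`Darit(P)·B` is polynomial-valued (i.e. each of its components agrees with a
polynomial at every generic tuple — being rational-function valued, it is then
polynomial) if and only if `P` is push-invariant, where `B` is the mould
concentrated in depth 1 with `B(u_1) = 1`. -/
theorem Darit_B_polynomial_iff_push_invariant (P : Mould) (hP : MemARI P)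
    (hPpol : IsPolynomial P) :
    (∀ r : ℕ, ∃ q : MvPolynomial (Fin r) ℚ, ∀ u : Fin r → ℚ, Generic u →
        Darit P Bm r u = MvPolynomial.eval u q) ↔
      (∀ (r : ℕ) (u : Fin r → ℚ), push P r u = P r u) :=
  Darit_B_polynomial_iff_push_invariant_general P hPpol
end

section
/- Let δ be the ℚ-linear derivation of ℚ⟨C⟩ determined by δ(C_k) = −C_{k+1} for all k ≥ 1 (this corresponds to the operation p ↦ [p,a] on Lie polynomials). Then for every p ∈ ℚ⟨C⟩, ma(δ(p)) = dur(ma(p)). -/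
namespace Mould

/-- The mould associated to a word `w = (n_1, …, n_r)` in the generators
(the letter `n` standing for the generator `C_{n+1}`): it is concentrated in
depth `r = length w` where its value is `(−1)^{n_1+⋯+n_r} u_1^{n_1} ⋯ u_r^{n_r}`,
i.e. the monomial `C_{k_1} ⋯ C_{k_r}` (`k_j = n_j + 1`) goes to
`(−1)^{k_1+⋯+k_r−r} u_1^{k_1−1} ⋯ u_r^{k_r−1}`. -/
def wordMould (w : List ℕ) : Mould := fun r u =>
  if h : r = w.length then
    ∏ j : Fin r, ((-1 : ℚ) ^ (w.get ⟨j.1, by have := j.2; omega⟩)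
      * u j ^ (w.get ⟨j.1, by have := j.2; omega⟩))
  else 0

/-- `ℚ⟨C⟩`, the free associative `ℚ`-algebra on countably many generators
`C_1, C_2, C_3, …` (the index `n : ℕ` corresponds to the generator `C_{n+1}`). -/
abbrev QC : Type := FreeAlgebra ℚ ℕ

/-- The generator `C_k` (for `k ≥ 1`) of `ℚ⟨C⟩`. -/
noncomputable def Cgen (k : ℕ) : QC := FreeAlgebra.ι ℚ (k - 1)

/-- The linear map `ma` from `ℚ⟨C⟩` to moulds: it sends `1` to the mould equal
to `1` in depth 0 and `0` in positive depths, and the monomial `C_{k_1} ⋯ C_{k_r}`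
to the mould concentrated in depth `r` with value
`(−1)^{k_1+⋯+k_r−r} u_1^{k_1−1} ⋯ u_r^{k_r−1}`. -/
noncomputable def ma (f : QC) : Mould := fun r u =>
  Finsupp.sum
    (((FreeAlgebra.equivMonoidAlgebraFreeMonoid (R := ℚ) (X := ℕ)) f).coeff :
      FreeMonoid ℕ →₀ ℚ)
    (fun w c => c * wordMould (FreeMonoid.toList w) r u)

end Mould

/-! Both sides are linear in `p`, so it suffices to compare them on monomials.
By the Leibniz rule `δ(C_{k_1} ⋯ C_{k_r}) = −∑ᵢ C_{k_1} ⋯ C_{k_i+1} ⋯ C_{k_r}`, and raising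
`k_i` by one multiplies the monomial's mould by `−u_i`; summing over `i` produces the factor
`u_1 + ⋯ + u_r`. -/

namespace FreeAlgebra

theorem basisFreeMonoid_apply_eq_prod (R X : Type*) [CommSemiring R] (w : FreeMonoid X) :
    basisFreeMonoid R X w = (w.toList.map (ι R)).prod := by
  simp [basisFreeMonoid, equivMonoidAlgebraFreeMonoid, FreeMonoid.lift_apply]

variable {R : Type*} [CommRing R]

theorem apply_prod_map_ι_eq_neg_sum_modify (δ : FreeAlgebra R ℕ → FreeAlgebra R ℕ)
    (hleibniz : ∀ x y, δ (x * y) = δ x * y + x * δ y) (hι : ∀ n, δ (ι R n) = -ι R (n + 1))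
    (l : List ℕ) :
    δ (l.map (ι R)).prod = -∑ i : Fin l.length, ((l.modify i (· + 1)).map (ι R)).prod := by
  induction l with
  | nil => simpa using hleibniz 1 1
  | cons n t ih =>
    simp only [List.map_cons, List.prod_cons, hleibniz, hι, ih, List.length_cons,
      Fin.sum_univ_succ, Fin.val_zero, Fin.val_succ, List.modify_zero_cons,
      List.modify_succ_cons, mul_neg, Finset.mul_sum, neg_mul]
    abel

end FreeAlgebra

namespace Mould

theorem wordMould_of_eq_length {l : List ℕ} {r : ℕ} (h : r = l.length) (u : Fin r → ℚ) :
    wordMould l r u = ∏ j : Fin r, (-u j) ^ l[j.1] := by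
  rw [wordMould, dif_pos h]
  exact Finset.prod_congr rfl fun j _ => by rw [← mul_pow, neg_one_mul]; rfl

theorem wordMould_of_ne_length {l : List ℕ} {r : ℕ} (h : r ≠ l.length) (u : Fin r → ℚ) :
    wordMould l r u = 0 := dif_neg h

theorem wordMould_modify_succ (l : List ℕ) (i : Fin l.length) (u : Fin l.length → ℚ) :
    wordMould (l.modify i (· + 1)) l.length u = -u i * wordMould l l.length u := by
  have hval : ∀ j : Fin l.length,
      (l.modify i (· + 1))[j.1]'(by simp) = l[j.1] + if j = i then 1 else 0 := by
    intro j
    by_cases h : j = i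
    · subst h; simp
    · simp [h, List.getElem_modify_ne _ _ (Fin.val_ne_of_ne (Ne.symm h))]
  rw [wordMould_of_eq_length (List.length_modify _ _ _).symm, wordMould_of_eq_length rfl]
  simp only [hval, pow_add, Finset.prod_mul_distrib, pow_ite, pow_one, pow_zero,
    Finset.prod_ite_eq', Finset.mem_univ, if_true]
  rw [mul_comm, neg_mul]

theorem sum_wordMould_modify_succ (l : List ℕ) (r : ℕ) (u : Fin r → ℚ) :
    ∑ i : Fin l.length, wordMould (l.modify i (· + 1)) r u = -(∑ j, u j) * wordMould l r u := by
  by_cases h : r = l.length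
  · subst h
    simp only [wordMould_modify_succ, Finset.sum_mul, Finset.sum_neg_distrib, neg_mul]
  · simp [wordMould_of_ne_length h, wordMould_of_ne_length (l := l.modify _ _) (by simpa using h)]

noncomputable def maEval (r : ℕ) (u : Fin r → ℚ) : QC →ₗ[ℚ] ℚ :=
  Finsupp.linearCombination ℚ (fun w : FreeMonoid ℕ => wordMould w.toList r u) ∘ₗ
    (FreeAlgebra.basisFreeMonoid ℚ ℕ).repr

theorem ma_apply (f : QC) (r : ℕ) (u : Fin r → ℚ) : ma f r u = maEval r u f := by
  simp [ma, maEval, Finsupp.linearCombination_apply, Finsupp.sum, FreeAlgebra.basisFreeMonoid]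

theorem maEval_list_prod_ι (r : ℕ) (u : Fin r → ℚ) (l : List ℕ) :
    maEval r u (l.map (FreeAlgebra.ι ℚ)).prod = wordMould l r u := by
  have h := FreeAlgebra.basisFreeMonoid_apply_eq_prod ℚ ℕ (.ofList l)
  rw [FreeMonoid.toList_ofList] at h
  simp [← h, maEval]

end Mould

open Mould in
/-- Let `δ` be the `ℚ`-linear derivation of `ℚ⟨C⟩` determined
by `δ(C_k) = −C_{k+1}` for all `k ≥ 1` (corresponding to the operation
`p ↦ [p,a]` on Lie polynomials). Then for every `p ∈ ℚ⟨C⟩`,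
`ma(δ(p)) = dur(ma(p))`. -/
theorem ma_deriv_eq_dur (δ : QC →ₗ[ℚ] QC)
    (hleibniz : ∀ x y : QC, δ (x * y) = δ x * y + x * δ y)
    (hδ : ∀ k : ℕ, 1 ≤ k → δ (Cgen k) = -Cgen (k + 1)) (p : QC) :
    ma (δ p) = dur (ma p) := by
  have hι (n : ℕ) : δ (FreeAlgebra.ι ℚ n) = -FreeAlgebra.ι ℚ (n + 1) := by
    simpa [Cgen] using hδ (n + 1) (by omega)
  funext r u
  rw [dur, ma_apply, ma_apply]
  suffices (maEval r u).comp δ = (∑ j, u j) • maEval r u from LinearMap.congr_fun this p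
  refine (FreeAlgebra.basisFreeMonoid ℚ ℕ).ext fun w => ?_
  rw [LinearMap.comp_apply, LinearMap.smul_apply, FreeAlgebra.basisFreeMonoid_apply_eq_prod,
    FreeAlgebra.apply_prod_map_ι_eq_neg_sum_modify δ hleibniz hι, map_neg, map_sum]
  simp only [maEval_list_prod_ι, sum_wordMould_modify_succ, smul_eq_mul, neg_mul, neg_neg]
end

section
/- Define elements q_r ∈ ℚ⟨C⟩ recursively by q_1 = −C_2 and q_{r+1} = q_r·C_1 − C_1·q_r (so that q_r corresponds to the Lie element ad(−b)^r(−a)). Then for every r ≥ 1, the mould ma(q_r) is concentrated in depth r and ma(q_r)(u_1,…,u_r) = Σ_{j=0}^{r−1} (−1)^j · binom(r−1, j) · u_{j+1}. -/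
namespace Mould

/-- The elements `q_r ∈ ℚ⟨C⟩` defined recursively by `q_1 = −C_2` and
`q_{r+1} = q_r·C_1 − C_1·q_r` (so that `q_r` corresponds to the Lie element
`ad(−b)^r(−a)`). -/
noncomputable def qSeq : ℕ → QC
  | 0 => 0
  | 1 => -Cgen 2
  | (n + 2) => qSeq (n + 1) * Cgen 1 - Cgen 1 * qSeq (n + 1)

end Mould

/-!
The recursion says `q_{n+1} = (R - L)ⁿ(-C₂)`, where `L` and `R` are left and right
multiplication by `C₁`. These commute, so the binomial theorem gives
`q_{n+1} = -∑ⱼ (-1)ʲ binom(n, j) C₁ʲ C₂ C₁ⁿ⁻ʲ`, and `ma` sends the monomial `C₁ʲ C₂ C₁ᵏ` to the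
mould concentrated in depth `j + k + 1` with value `-u_{j+1}`.
-/

open Finset

theorem LinearMap.mulRight_sub_mulLeft_pow_apply {R A : Type*} [CommRing R] [Ring A] [Algebra R A]
    (a b : A) (n : ℕ) :
    ((mulRight R a - mulLeft R a) ^ n) b
      = ∑ p ∈ antidiagonal n, ((-1) ^ p.1 * n.choose p.1 : R) • (a ^ p.1 * b * a ^ p.2) := by
  have hneg : -mulLeft R a = mulLeft R ((-1 : R) • a) := by ext; simp
  have hcomm : Commute (mulLeft R ((-1 : R) • a)) (mulRight R a) := commute_mulLeft_right _ a
  rw [sub_eq_neg_add, hneg, hcomm.add_pow', sum_apply]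
  refine sum_congr rfl fun p _ => ?_
  rw [pow_mulLeft, pow_mulRight, smul_pow, mul_smul, Nat.cast_smul_eq_nsmul]
  simp [mul_assoc]

theorem FreeAlgebra.equivMonoidAlgebraFreeMonoid_symm_of {R X : Type*} [CommSemiring R]
    (w : FreeMonoid X) :
    equivMonoidAlgebraFreeMonoid.symm (MonoidAlgebra.of R (FreeMonoid X) w)
      = FreeMonoid.lift (ι R) w := by
  simp [equivMonoidAlgebraFreeMonoid]

namespace Mould

noncomputable def maLinear : QC →ₗ[ℚ] Mould where
  toFun := ma
  map_add' f g := by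
    funext r u
    simp only [ma, map_add, MonoidAlgebra.coeff_add, Pi.add_apply]
    exact Finsupp.sum_add_index' (fun _ => zero_mul _) (fun _ _ _ => add_mul _ _ _)
  map_smul' c f := by
    funext r u
    simp only [ma, map_smul, MonoidAlgebra.coeff_smul, RingHom.id_apply, Pi.smul_apply,
      smul_eq_mul]
    rw [Finsupp.sum_smul_index' (fun _ => zero_mul _), Finsupp.mul_sum]
    simp only [smul_eq_mul, mul_assoc]

theorem maLinear_apply (f : QC) : maLinear f = ma f := rfl

theorem ma_lift_ι (w : FreeMonoid ℕ) :
    ma (FreeMonoid.lift (FreeAlgebra.ι ℚ) w) = wordMould w.toList := by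
  funext r u
  rw [← FreeAlgebra.equivMonoidAlgebraFreeMonoid_symm_of, ma, AlgEquiv.apply_symm_apply,
    MonoidAlgebra.of_apply, MonoidAlgebra.coeff_single, Finsupp.sum_single_index (zero_mul _),
    one_mul]

theorem ma_Cgen_one_pow_mul_Cgen_two_mul (j k : ℕ) :
    ma (Cgen 1 ^ j * Cgen 2 * Cgen 1 ^ k)
      = wordMould (List.replicate j 0 ++ 1 :: List.replicate k 0) := by
  have : Cgen 1 ^ j * Cgen 2 * Cgen 1 ^ k = FreeMonoid.lift (FreeAlgebra.ι ℚ)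
      (.ofList (List.replicate j 0 ++ 1 :: List.replicate k 0)) := by
    simp [Cgen, FreeMonoid.lift_ofList, List.prod_replicate, mul_assoc]
  rw [this, ma_lift_ι, FreeMonoid.toList_ofList]

theorem getElem_replicate_append_cons (j k i : ℕ)
    (hi : i < (List.replicate j 0 ++ 1 :: List.replicate k 0).length) :
    (List.replicate j 0 ++ 1 :: List.replicate k 0)[i] = if i = j then 1 else 0 := by
  rcases lt_trichotomy i j with h | rfl | h
  · rw [List.getElem_append_left (by rwa [List.length_replicate])]
    simp [h.ne]
  · rw [List.getElem_append_right (by rw [List.length_replicate])]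
    simp
  · rw [List.getElem_append_right (by rw [List.length_replicate]; omega)]
    simp [h.ne', List.getElem_cons, Nat.sub_ne_zero_of_lt h]

theorem wordMould_replicate_append (j k s : ℕ) (u : Fin s → ℚ) :
    wordMould (List.replicate j 0 ++ 1 :: List.replicate k 0) s u
      = if h : s = j + k + 1 then -u ⟨j, by omega⟩ else 0 := by
  have hlen : (List.replicate j 0 ++ 1 :: List.replicate k 0).length = j + k + 1 := by
    simp only [List.length_append, List.length_replicate, List.length_cons]; omega
  unfold wordMould
  split_ifs with hw hs hs
  · subst hs
    rw [prod_eq_single ⟨j, by omega⟩ (fun i _ hi => ?_) (by simp)]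
    · simp
    · simp [getElem_replicate_append_cons, Fin.ext_iff.not.mp hi]
  · omega
  · omega
  · rfl

theorem qSeq_succ (n : ℕ) :
    qSeq (n + 1)
      = ((LinearMap.mulRight ℚ (Cgen 1) - LinearMap.mulLeft ℚ (Cgen 1)) ^ n) (-Cgen 2) := by
  induction n with
  | zero => rfl
  | succ n ih => rw [pow_succ', Module.End.mul_apply, ← ih]; rfl

theorem ma_qSeq_succ_apply (n s : ℕ) (u : Fin s → ℚ) :
    ma (qSeq (n + 1)) s u
      = if s = n + 1 then ∑ j : Fin s, (-1) ^ j.1 * (n.choose j : ℚ) * u j else 0 := by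
  rw [qSeq_succ, LinearMap.mulRight_sub_mulLeft_pow_apply, ← maLinear_apply, map_sum,
    Finset.sum_apply, Finset.sum_apply]
  simp only [map_smul, mul_neg, neg_mul, map_neg, Pi.smul_apply, Pi.neg_apply, smul_eq_mul,
    maLinear_apply, ma_Cgen_one_pow_mul_Cgen_two_mul, wordMould_replicate_append]
  split_ifs with hs
  · subst hs
    rw [Nat.sum_antidiagonal_eq_sum_range_succ_mk, sum_range]
    refine sum_congr rfl fun j _ => ?_
    rw [dif_pos (by omega)]
    ring
  · refine sum_eq_zero fun p hp => ?_
    rw [HasAntidiagonal.mem_antidiagonal] at hp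
    rw [dif_neg (by omega), mul_zero, neg_zero]

end Mould

open Mould in
/-- For every `r ≥ 1`, the mould `ma(q_r)` is concentrated in
depth `r`, where its value is `Σ_{j=0}^{r−1} (−1)^j binom(r−1,j) u_{j+1}`. -/
theorem ma_qSeq (r : ℕ) (hr : 1 ≤ r) :
    (∀ u : Fin r → ℚ,
      ma (qSeq r) r u = ∑ j : Fin r, (-1 : ℚ) ^ j.1 * ((r - 1).choose j.1 : ℚ) * u j) ∧
    (∀ s : ℕ, s ≠ r → ∀ u : Fin s → ℚ, ma (qSeq r) s u = 0) := by
  obtain ⟨n, rfl⟩ := Nat.exists_eq_add_of_le' hr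
  refine ⟨fun u => ?_, fun s hs u => ?_⟩
  · rw [ma_qSeq_succ_apply, if_pos rfl, Nat.add_sub_cancel]
  · rw [ma_qSeq_succ_apply, if_neg hs]
end
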